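/- arXiv:2508.18637 — 4 statements merged into one kernel-verified Lean document; each statement's English description precedes it below -/
import Mathlib

section
/- Let G = (V, E) be an undirected multigraph and T ⊆ V a set of terminals. Let pq be an arbitrary edge of G with both endpoints p, q ∈ V \ T, let G₁ = G − pq be the graph obtained by deleting the edge pq, and let G₂ = G/pq be the multigraph obtained by contracting the edge pq (identifying p and q into a single non-terminal vertex, keeping all other edges, possibly creating parallel edges). Then at least one of the following holds: (1) κ'_{(G₁,T)}(u,v) = κ'_{(G,T)}(u,v) for all distinct u, v ∈ T; or (2) κ'_{(G₂,T)}(u,v) = κ'_{(G,T)}(u,v) for all distinct u, v ∈ T. -/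
/-!
A multigraph on `V` is a finite multiset `E : Multiset (Sym2 V)` of unordered
pairs of distinct vertices.

`κ'(u, v)` is the least `cutCost` of a vertex set `A ∋ u` with `v ∉ A`: the number of
non-terminal neighbours of `A` outside `A` plus the number of edges from `A` to terminals outside
`A`. Neither deleting nor contracting `pq` increases `κ'`. Suppose deletion lowers `κ'(u, v)` and
contraction lowers `κ'(x, y)`. Then a minimum `u`–`v` cut `S` contains one endpoint of `pq`, and
the other endpoint `w` is joined to `S` by `pq` alone; contraction yields a minimum `x`–`y` cut
`R` and a minimum `y`–`x` cut `R'` (the far side of `R` in the contracted graph), with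
complementary sets of terminals and both with `p` and `q` on their boundary. As `w` is on the
boundaries of `S` and `R` but not of `S ∩ R`, the cut cost is strictly submodular on `S, R`, and
likewise on `S, R'`; wherever `u` and `v` lie relative to `R`, one of these two inequalities
yields a cut cheaper than a minimum one.
-/

attribute [local instance] Classical.propDecidable

noncomputable section

/-- One adjacency step in the multigraph `E`, avoiding the deleted vertex set `Fv`. -/
def Adj {V : Type*} (E : Multiset (Sym2 V)) (Fv : Set V) (a b : V) : Prop :=
  s(a, b) ∈ E ∧ a ∉ Fv ∧ b ∉ Fv

/-- `u` and `v` lie in the same connected component of `E` after deleting the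
vertices in `Fv`. -/
def Connects {V : Type*} (E : Multiset (Sym2 V)) (Fv : Set V) (u v : V) : Prop :=
  Relation.ReflTransGen (Adj E Fv) u v

/-- Element-connectivity `κ'_{(G,T)}(u,v)`: the minimum cardinality of a set
`F = Fv ∪ Fe` of non-terminal vertices and edges whose deletion disconnects
`u` from `v`. -/
def elemConn {V : Type*} (E : Multiset (Sym2 V)) (T : Set V) (u v : V) : ℕ :=
  sInf {n | ∃ (Fv : Finset V) (Fe : Multiset (Sym2 V)), (↑Fv : Set V) ⊆ Tᶜ ∧ Fe ≤ E ∧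
    n = Fv.card + Multiset.card Fe ∧ ¬ Connects (E - Fe) (↑Fv) u v}

/-- The map identifying `q` with `p`. -/
def collapse {V : Type*} [DecidableEq V] (p q : V) : V → V :=
  fun x => if x = q then p else x

/-- Contraction of the edge `pq`: identify `p` and `q` (into `p`), keep all the other
edges (parallel edges may arise; copies of `pq` become loops and are discarded). -/
def contractE {V : Type*} [DecidableEq V] (E : Multiset (Sym2 V)) (p q : V) :
    Multiset (Sym2 V) :=
  (E.map (Sym2.map (collapse p q))).filter (fun e => ¬ e.IsDiag)

namespace Multiset

variable {α : Type*} {s : Multiset α} {p q p' q' : α → Prop}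
  [DecidablePred p] [DecidablePred q] [DecidablePred p'] [DecidablePred q']

theorem countP_add_countP_le_countP_add_countP
    (h : ∀ a ∈ s, (if p a then 1 else 0) + (if q a then 1 else 0) ≤
      (if p' a then 1 else 0) + (if q' a then 1 else 0)) :
    s.countP p + s.countP q ≤ s.countP p' + s.countP q' := by
  induction s using Multiset.induction_on with
  | empty => simp
  | cons a s ih =>
    have ha := h a (mem_cons_self a s)
    have hs := ih fun b hb => h b (mem_cons_of_mem hb)
    simp only [countP_cons]
    omega

theorem countP_le_countP_of_imp (h : ∀ a ∈ s, p a → q a) : s.countP p ≤ s.countP q := by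
  simpa using countP_add_countP_le_countP_add_countP (q := fun _ => False)
    (q' := fun _ => False) (p' := q) fun a ha => by by_cases hp : p a <;> simp [hp, h a ha]

theorem countP_add_countP_le_countP_of_disjoint (hp : ∀ a ∈ s, p a → p' a)
    (hq : ∀ a ∈ s, q a → p' a) (hpq : ∀ a ∈ s, p a → ¬ q a) :
    s.countP p + s.countP q ≤ s.countP p' := by
  simpa using countP_add_countP_le_countP_add_countP (q' := fun _ => False) fun a ha => by
    by_cases hpa : p a <;> by_cases hqa : q a <;> simp_all

theorem notMem_sub_filter [DecidableEq α] {a : α} (ha : p a) : a ∉ s - s.filter p := by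
  rw [← count_pos, count_sub, count_filter_of_pos ha]
  simp

end Multiset

section Connectivity

variable {V : Type*} {E : Multiset (Sym2 V)} {T Fv S : Set V} {u v : V}

instance : Std.Symm (Adj E Fv) :=
  ⟨fun _ _ ⟨h, ha, hb⟩ => ⟨Sym2.eq_swap ▸ h, hb, ha⟩⟩

theorem Connects.symm (h : Connects E Fv u v) : Connects E Fv v u :=
  Relation.ReflTransGen.stdSymm.symm _ _ h

theorem Connects.mem_of_closed (hS : ∀ b c, b ∈ S → Adj E Fv b c → c ∈ S) (hu : u ∈ S)
    (h : Connects E Fv u v) : v ∈ S := by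
  induction h with
  | refl => exact hu
  | tail _ hadj ih => exact hS _ _ ih hadj

theorem elemConn_comm (E : Multiset (Sym2 V)) (T : Set V) (u v : V) :
    elemConn E T u v = elemConn E T v u := by
  have hsymm : ∀ (F : Multiset (Sym2 V)) (Fv : Set V), Connects F Fv u v ↔ Connects F Fv v u :=
    fun _ _ => ⟨Connects.symm, Connects.symm⟩
  simp only [elemConn, hsymm]

def Crosses (T : Set V) (A : Finset V) (e : Sym2 V) : Prop :=
  ∃ a ∈ e, ∃ b ∈ e, a ∈ A ∧ b ∈ T ∧ b ∉ A

@[simp]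
theorem crosses_mk {A : Finset V} {a b : V} :
    Crosses T A s(a, b) ↔ (a ∈ A ∧ b ∈ T ∧ b ∉ A) ∨ (b ∈ A ∧ a ∈ T ∧ a ∉ A) := by
  simp only [Crosses, Sym2.mem_iff, exists_eq_or_imp, exists_eq_left]
  tauto

theorem Crosses.not_isDiag {A : Finset V} {e : Sym2 V} (h : Crosses T A e) : ¬ e.IsDiag := by
  induction e using Sym2.ind with
  | _ a b =>
    rw [Sym2.mk_isDiag_iff]
    rintro rfl
    simp only [crosses_mk, or_self] at h
    exact h.2.2 h.1

theorem crosses_map_iff {W : Type*} {T' : Set W} {A : Finset V} {B : Finset W} {f : V → W}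
    {e : Sym2 V} (hB : ∀ x, f x ∈ B ↔ x ∈ A) (hT : ∀ x, f x ∈ T' ↔ x ∈ T) :
    Crosses T' B (e.map f) ↔ Crosses T A e := by
  simp [Crosses, Sym2.mem_map, hB, hT]

def LeavesAvoiding (A F : Finset V) (e : Sym2 V) : Prop :=
  ∃ a ∈ A, ∃ w ∉ A, w ∉ F ∧ e = s(a, w)

theorem card_le_countP_of_forall_exists_edge {W : Finset V} {P : Sym2 V → Prop}
    [DecidablePred P] (h : ∀ w ∈ W, ∃ z ∉ W, s(z, w) ∈ E ∧ P s(z, w)) :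
    W.card ≤ E.countP P := by
  choose! f hfW hfE hfP using h
  calc W.card ≤ (E.filter P).toFinset.card := by
        refine Finset.card_le_card_of_injOn (fun w => s(f w, w))
          (fun w hw => by simp [hfE w hw, hfP w hw]) fun w₁ hw₁ w₂ hw₂ heq => ?_
        rcases Sym2.eq_iff.1 heq with ⟨-, h⟩ | ⟨h, -⟩
        · exact h
        · exact absurd (h ▸ hw₂) (hfW w₁ hw₁)
    _ ≤ Multiset.card (E.filter P) := Multiset.toFinset_card_le _
    _ = E.countP P := (Multiset.countP_eq_card_filter _ _).symm

section CrossingCounts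

variable [DecidableEq V] {A B : Finset V} {z : V} {e : Sym2 V}

theorem Crosses.of_erase (hz : z ∉ T) (h : Crosses T (A.erase z) e) : Crosses T A e := by
  obtain ⟨a, hae, b, hbe, ha, hbT, hbA⟩ := h
  exact ⟨a, hae, b, hbe, Finset.mem_of_mem_erase ha, hbT,
    fun h => hbA (Finset.mem_erase.2 ⟨fun hbz => hz (hbz ▸ hbT), h⟩)⟩

theorem countP_crosses_erase_le (hz : z ∉ T) :
    E.countP (Crosses T (A.erase z)) ≤ E.countP (Crosses T A) :=
  Multiset.countP_le_countP_of_imp fun _ _ => Crosses.of_erase hz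

theorem countP_crosses_erase_edge (he : ¬ Crosses T A e) :
    (E.erase e).countP (Crosses T A) = E.countP (Crosses T A) := by
  by_cases heE : e ∈ E
  · conv_rhs => rw [← Multiset.cons_erase heE]
    rw [Multiset.countP_cons_of_neg _ he]
  · rw [Multiset.erase_of_notMem heE]

theorem countP_crosses_union_add_inter_le :
    E.countP (Crosses T (A ∪ B)) + E.countP (Crosses T (A ∩ B)) ≤
      E.countP (Crosses T A) + E.countP (Crosses T B) := by
  refine Multiset.countP_add_countP_le_countP_add_countP fun e _ => ?_
  induction e using Sym2.ind with
  | _ a b =>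
    simp only [crosses_mk, Finset.mem_union, Finset.mem_inter]
    split_ifs <;> grind

end CrossingCounts

end Connectivity

section Cuts

variable {V : Type*} [Fintype V] {E E' : Multiset (Sym2 V)} {T : Set V} {A : Finset V}
  {u v w : V}

def cutBoundary (E : Multiset (Sym2 V)) (T : Set V) (A : Finset V) : Finset V :=
  {w | w ∉ A ∧ w ∉ T ∧ ∃ a ∈ A, s(a, w) ∈ E}

@[simp]
theorem mem_cutBoundary :
    w ∈ cutBoundary E T A ↔ w ∉ A ∧ w ∉ T ∧ ∃ a ∈ A, s(a, w) ∈ E := by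
  simp [cutBoundary]

def cutCost (E : Multiset (Sym2 V)) (T : Set V) (A : Finset V) : ℕ :=
  (cutBoundary E T A).card + E.countP (Crosses T A)

structure IsMinCut (E : Multiset (Sym2 V)) (T : Set V) (u v : V) (A : Finset V) : Prop where
  mem_left : u ∈ A
  notMem_right : v ∉ A
  cutCost_le : cutCost E T A ≤ elemConn E T u v

theorem elemConn_le_cutCost (hu : u ∈ A) (hv : v ∉ A) : elemConn E T u v ≤ cutCost E T A := by
  refine Nat.sInf_le ⟨cutBoundary E T A, E.filter (Crosses T A),
    fun w hw => (mem_cutBoundary.1 hw).2.1, Multiset.filter_le _ _,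
    by rw [cutCost, Multiset.countP_eq_card_filter], fun h => hv (h.mem_of_closed ?_ hu)⟩
  rintro b c hb ⟨hbc, -, hc⟩
  by_contra hcA
  have hbcE : s(b, c) ∈ E := Multiset.mem_of_le (Multiset.sub_le_self _ _) hbc
  by_cases hcT : c ∈ T
  · exact Multiset.notMem_sub_filter (crosses_mk.2 (Or.inl ⟨hb, hcT, hcA⟩)) hbc
  · exact hc (mem_cutBoundary.2 ⟨hcA, hcT, b, hb, hbcE⟩)

/-- Boundary vertices in `Fv` are paid for by `Fv`; every other boundary vertex, and every edge
from `A` to a terminal outside `A`, is paid for by its own edge leaving `A` and avoiding `Fv`. -/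
theorem cutCost_le_card_add_countP_leavesAvoiding {Fv : Finset V} (hFv : (Fv : Set V) ⊆ Tᶜ) :
    cutCost E T A ≤ Fv.card + E.countP (LeavesAvoiding A Fv) := by
  have hbd : ((cutBoundary E T A).filter (· ∉ Fv)).card ≤
      E.countP (fun e => LeavesAvoiding A Fv e ∧ ¬ Crosses T A e) := by
    refine card_le_countP_of_forall_exists_edge fun w hw => ?_
    obtain ⟨⟨hwA, hwT, a, ha, haw⟩, hwF⟩ := by simpa using hw
    refine ⟨a, fun h => (mem_cutBoundary.1 (Finset.mem_filter.1 h).1).1 ha, haw,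
      ⟨a, ha, w, hwA, hwF, rfl⟩, ?_⟩
    simp [hwT, ha]
  have hcross : E.countP (fun e => LeavesAvoiding A Fv e ∧ ¬ Crosses T A e) +
      E.countP (Crosses T A) ≤ E.countP (LeavesAvoiding A Fv) := by
    refine Multiset.countP_add_countP_le_countP_of_disjoint (fun _ _ h => h.1) ?_
      fun _ _ h => h.2
    rintro e - ⟨a, hae, b, hbe, ha, hbT, hbA⟩
    obtain rfl := (Sym2.mem_and_mem_iff fun (hab : a = b) => hbA (hab ▸ ha)).1 ⟨hae, hbe⟩
    exact ⟨a, ha, b, hbA, fun hbF => hFv hbF hbT, rfl⟩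
  have hsplit := Finset.card_filter_add_card_filter_not (s := cutBoundary E T A) (· ∈ Fv)
  have hFvA : ((cutBoundary E T A).filter (· ∈ Fv)).card ≤ Fv.card :=
    Finset.card_le_card fun w hw => (Finset.mem_filter.1 hw).2
  unfold cutCost
  omega

/-- The component of `u` after a deletion is a cut no more expensive than the deletion. -/
theorem exists_cutCost_le_of_not_connects {Fv : Finset V} {Fe : Multiset (Sym2 V)}
    (hFv : (Fv : Set V) ⊆ Tᶜ) (hu : u ∈ T) (h : ¬ Connects (E - Fe) Fv u v) :
    ∃ A, u ∈ A ∧ v ∉ A ∧ cutCost E T A ≤ Fv.card + Multiset.card Fe := by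
  set A : Finset V := {z | Connects (E - Fe) Fv u z}
  have hA (z : V) : z ∈ A ↔ Connects (E - Fe) Fv u z := by simp [A]
  have hAFv (a : V) (ha : a ∈ A) : a ∉ Fv := by
    intro haF
    rcases ((hA a).1 ha).cases_tail with rfl | ⟨_, _, -, -, hFa⟩
    · exact hFv haF hu
    · exact hFa haF
  have hleaving : E.filter (LeavesAvoiding A Fv) ≤ Fe := by
    refine Multiset.le_iff_count.2 fun e => ?_
    by_cases he : LeavesAvoiding A Fv e
    · obtain ⟨a, ha, w, hwA, hwF, rfl⟩ := he
      rw [Multiset.count_filter_of_pos ⟨a, ha, w, hwA, hwF, rfl⟩]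
      by_contra! hlt
      refine hwA ((hA w).2 (((hA a).1 ha).tail ⟨Multiset.mem_sub.2 hlt, ?_, ?_⟩))
      · exact_mod_cast hAFv a ha
      · exact_mod_cast hwF
    · rw [Multiset.count_eq_zero_of_notMem fun hm => he (Multiset.mem_filter.1 hm).2]
      exact Nat.zero_le _
  refine ⟨A, (hA u).2 .refl, fun hv => h ((hA v).1 hv),
    (cutCost_le_card_add_countP_leavesAvoiding hFv).trans ?_⟩
  rw [Multiset.countP_eq_card_filter]
  exact Nat.add_le_add_left (Multiset.card_le_card hleaving) _

theorem exists_isMinCut (hu : u ∈ T) (huv : u ≠ v) : ∃ A, IsMinCut E T u v A := by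
  have hne : ∃ n, n ∈ {n | ∃ (Fv : Finset V) (Fe : Multiset (Sym2 V)), (↑Fv : Set V) ⊆ Tᶜ ∧
      Fe ≤ E ∧ n = Fv.card + Multiset.card Fe ∧ ¬ Connects (E - Fe) (↑Fv) u v} := by
    refine ⟨_, ∅, E, by simp, le_rfl, rfl, fun h => huv ?_⟩
    refine (h.mem_of_closed (S := {u}) (fun b c _ hbc => ?_) rfl).symm
    simpa using hbc.1
  obtain ⟨Fv, Fe, hFv, -, hcard, hdis⟩ := Nat.sInf_mem hne
  obtain ⟨A, huA, hvA, hA⟩ := exists_cutCost_le_of_not_connects hFv hu hdis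
  exact ⟨A, ⟨huA, hvA, hA.trans_eq hcard.symm⟩⟩

theorem mem_of_adj_of_notMem_cutBoundary {a : V} (ha : a ∈ A) (haw : s(a, w) ∈ E) (hwA : w ∉ A)
    (hw : w ∉ cutBoundary E T A) : w ∈ T := by
  by_contra hwT
  exact hw (mem_cutBoundary.2 ⟨hwA, hwT, a, ha, haw⟩)

theorem cutBoundary_mono (h : E' ≤ E) : cutBoundary E' T A ⊆ cutBoundary E T A := by
  intro w hw
  obtain ⟨hwA, hwT, a, ha, haw⟩ := mem_cutBoundary.1 hw
  exact mem_cutBoundary.2 ⟨hwA, hwT, a, ha, Multiset.mem_of_le h haw⟩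

theorem elemConn_le_of_le (h : E' ≤ E) (hu : u ∈ T) (huv : u ≠ v) :
    elemConn E' T u v ≤ elemConn E T u v := by
  obtain ⟨A, hA⟩ := exists_isMinCut (E := E) hu huv
  calc elemConn E' T u v ≤ cutCost E' T A := elemConn_le_cutCost hA.mem_left hA.notMem_right
    _ ≤ cutCost E T A := add_le_add (Finset.card_le_card (cutBoundary_mono h))
          (Multiset.countP_le_of_le _ h)
    _ ≤ elemConn E T u v := hA.cutCost_le

end Cuts

section Uncrossing

variable {V : Type*} [Fintype V] [DecidableEq V] {E : Multiset (Sym2 V)} {T : Set V}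
  {A B S R R' : Finset V} {u v w x y z : V} {e : Sym2 V}

theorem cutBoundary_erase_subset :
    cutBoundary E T (A.erase z) ⊆ insert z (cutBoundary E T A) := by
  intro w hw
  obtain ⟨hwA, hwT, a, ha, haw⟩ := mem_cutBoundary.1 hw
  by_cases hwz : w = z
  · exact Finset.mem_insert.2 (Or.inl hwz)
  · exact Finset.mem_insert_of_mem (mem_cutBoundary.2
      ⟨fun h => hwA (Finset.mem_erase.2 ⟨hwz, h⟩), hwT, a, Finset.mem_of_mem_erase ha, haw⟩)

theorem eq_of_mem_cutBoundary_of_notMem_erase (hw : w ∈ cutBoundary E T A)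
    (hw' : w ∉ cutBoundary (E.erase e) T A) : ∀ a ∈ A, s(a, w) ∈ E → s(a, w) = e := by
  obtain ⟨hwA, hwT, -⟩ := mem_cutBoundary.1 hw
  intro a ha haw
  by_contra hne
  exact hw' (mem_cutBoundary.2 ⟨hwA, hwT, a, ha, (Multiset.mem_erase_of_ne hne).2 haw⟩)

theorem card_cutBoundary_le_erase_add_one :
    (cutBoundary E T A).card ≤ (cutBoundary (E.erase e) T A).card + 1 := by
  have hle : (cutBoundary E T A \ cutBoundary (E.erase e) T A).card ≤ 1 := by
    refine Finset.card_le_one.2 fun w₁ hw₁ w₂ hw₂ => ?_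
    rw [Finset.mem_sdiff] at hw₁ hw₂
    obtain ⟨hw₁A, -, a₁, ha₁, h₁⟩ := mem_cutBoundary.1 hw₁.1
    obtain ⟨hw₂A, -, a₂, ha₂, h₂⟩ := mem_cutBoundary.1 hw₂.1
    have heq := (eq_of_mem_cutBoundary_of_notMem_erase hw₁.1 hw₁.2 a₁ ha₁ h₁).trans
      (eq_of_mem_cutBoundary_of_notMem_erase hw₂.1 hw₂.2 a₂ ha₂ h₂).symm
    rcases Sym2.eq_iff.1 heq with ⟨-, h⟩ | ⟨rfl, -⟩
    · exact h
    · exact absurd ha₁ hw₂A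
  have := Finset.card_le_card_sdiff_add_card (s := cutBoundary E T A)
    (t := cutBoundary (E.erase e) T A)
  omega

theorem card_cutBoundary_union_add_inter_lt (hwA : w ∈ cutBoundary E T A)
    (hwB : w ∈ cutBoundary E T B) (hw : ∀ a ∈ A, s(a, w) ∈ E → a ∉ B) :
    (cutBoundary E T (A ∪ B)).card + (cutBoundary E T (A ∩ B)).card <
      (cutBoundary E T A).card + (cutBoundary E T B).card := by
  have hunion : cutBoundary E T (A ∪ B) ∪ cutBoundary E T (A ∩ B) ⊆
      cutBoundary E T A ∪ cutBoundary E T B := by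
    intro x hx
    simp only [Finset.mem_union, Finset.mem_inter, mem_cutBoundary] at hx ⊢
    grind
  have hinter : cutBoundary E T (A ∪ B) ∩ cutBoundary E T (A ∩ B) ⊆
      (cutBoundary E T A ∩ cutBoundary E T B).erase w := by
    intro x hx
    simp only [Finset.mem_union, Finset.mem_inter, Finset.mem_erase, mem_cutBoundary] at hx ⊢
    obtain ⟨⟨hxAB, hxT, -⟩, -, -, a, ⟨haA, haB⟩, hax⟩ := hx
    refine ⟨fun hxw => hw a haA (hxw ▸ hax) haB, ⟨?_, hxT, a, haA, hax⟩, ?_, hxT, a, haB, hax⟩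
    all_goals grind
  have hw : w ∈ cutBoundary E T A ∩ cutBoundary E T B := Finset.mem_inter.2 ⟨hwA, hwB⟩
  have h₁ := Finset.card_le_card hunion
  have h₂ := Finset.card_le_card hinter
  rw [Finset.card_erase_of_mem hw] at h₂
  have h₃ := Finset.card_pos.2 ⟨w, hw⟩
  rw [← Finset.card_union_add_card_inter (cutBoundary E T A),
    ← Finset.card_union_add_card_inter (cutBoundary E T (A ∪ B))]
  omega

theorem cutCost_union_add_inter_lt (hwA : w ∈ cutBoundary E T A) (hwB : w ∈ cutBoundary E T B)
    (hw : ∀ a ∈ A, s(a, w) ∈ E → a ∉ B) :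
    cutCost E T (A ∪ B) + cutCost E T (A ∩ B) < cutCost E T A + cutCost E T B := by
  have := card_cutBoundary_union_add_inter_lt hwA hwB hw
  have := countP_crosses_union_add_inter_le (E := E) (T := T) (A := A) (B := B)
  unfold cutCost
  omega

theorem exists_isMinCut_of_elemConn_erase_lt {p q : V} (hp : p ∉ T) (hq : q ∉ T) (hu : u ∈ T)
    (huv : u ≠ v) (hlt : elemConn (E.erase s(p, q)) T u v < elemConn E T u v) :
    ∃ S, IsMinCut E T u v S ∧ ∀ R, p ∈ cutBoundary E T R → q ∈ cutBoundary E T R →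
      cutCost E T (S ∪ R) + cutCost E T (S ∩ R) < cutCost E T S + cutCost E T R := by
  obtain ⟨S, hS⟩ := exists_isMinCut (E := E.erase s(p, q)) hu huv
  have hlow := elemConn_le_cutCost (E := E) (T := T) hS.mem_left hS.notMem_right
  have hcross := countP_crosses_erase_edge (E := E) (T := T) (A := S) (e := s(p, q))
    fun h => by rcases crosses_mk.1 h with h | h; exacts [hq h.2.1, hp h.2.1]
  have hbd := card_cutBoundary_le_erase_add_one (E := E) (T := T) (A := S) (e := s(p, q))
  have hS' := hS.cutCost_le
  unfold cutCost at hlow hS'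
  obtain ⟨w, hw, hw'⟩ := Finset.exists_mem_notMem_of_card_lt_card (by omega :
    (cutBoundary (E.erase s(p, q)) T S).card < (cutBoundary E T S).card)
  have honly := eq_of_mem_cutBoundary_of_notMem_erase hw hw'
  refine ⟨S, ⟨hS.mem_left, hS.notMem_right, by unfold cutCost; omega⟩, fun R hpR hqR => ?_⟩
  obtain ⟨-, -, a, ha, haw⟩ := mem_cutBoundary.1 hw
  have hwR : w ∈ cutBoundary E T R := by
    rcases Sym2.mem_iff.1 (honly a ha haw ▸ Sym2.mem_mk_right a w) with rfl | rfl <;> assumption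
  refine cutCost_union_add_inter_lt hw hwR fun b hb hbw => ?_
  rcases Sym2.mem_iff.1 (honly b hb hbw ▸ Sym2.mem_mk_left b w) with rfl | rfl
  exacts [(mem_cutBoundary.1 hpR).1, (mem_cutBoundary.1 hqR).1]

theorem IsMinCut.uncross (hS : IsMinCut E T u v S) (hR : IsMinCut E T x y R)
    (hSR : cutCost E T (S ∪ R) + cutCost E T (S ∩ R) < cutCost E T S + cutCost E T R) :
    (v ∉ R → x ∉ S) ∧ (u ∈ R → y ∈ S) ∧
      (x ∈ S → y ∉ S → elemConn E T x y < elemConn E T u v) := by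
  have hlt := hSR.trans_le (add_le_add hS.cutCost_le hR.cutCost_le)
  have hunion {a b : V} (ha : a ∈ S ∨ a ∈ R) (hb : b ∉ S) (hb' : b ∉ R) :=
    elemConn_le_cutCost (E := E) (T := T) (Finset.mem_union.2 ha)
      (Finset.notMem_union.2 ⟨hb, hb'⟩)
  have hinter {a b : V} (ha : a ∈ S) (ha' : a ∈ R) (hb : b ∉ S ∨ b ∉ R) :=
    elemConn_le_cutCost (E := E) (T := T) (Finset.mem_inter.2 ⟨ha, ha'⟩)
      (fun h => hb.elim (· (Finset.mem_inter.1 h).1) (· (Finset.mem_inter.1 h).2))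
  refine ⟨fun hvR hxS => ?_, fun huR => by_contra fun hyS => ?_, fun hxS hyS => ?_⟩
  · have := hunion (.inl hS.mem_left) hS.notMem_right hvR
    have := hinter hxS hR.mem_left (.inr hR.notMem_right)
    omega
  · have := hinter hS.mem_left huR (.inl hS.notMem_right)
    have := hunion (.inr hR.mem_left) hyS hR.notMem_right
    omega
  · have := hunion (.inl hxS) hyS hR.notMem_right
    have := hinter hxS hR.mem_left (.inr hR.notMem_right)
    omega

theorem IsMinCut.false_of_uncross (hS : IsMinCut E T u v S) (hR : IsMinCut E T x y R)
    (hR' : IsMinCut E T y x R') (hu : u ∈ R' ↔ u ∉ R) (hv : v ∈ R' ↔ v ∉ R)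
    (hSR : cutCost E T (S ∪ R) + cutCost E T (S ∩ R) < cutCost E T S + cutCost E T R)
    (hSR' : cutCost E T (S ∪ R') + cutCost E T (S ∩ R') < cutCost E T S + cutCost E T R') :
    False := by
  obtain ⟨h₁, h₂, h₃⟩ := hS.uncross hR hSR
  obtain ⟨h₁', h₂', h₃'⟩ := hS.uncross hR' hSR'
  have hyx := elemConn_comm E T y x
  by_cases huR : u ∈ R <;> by_cases hvR : v ∈ R
  · exact h₁' (fun h => hv.1 h hvR) (h₂ huR)
  · have := elemConn_le_cutCost (E := E) (T := T) huR hvR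
    have := h₃' (h₂ huR) (h₁ hvR)
    have := hR.cutCost_le
    omega
  · have := elemConn_le_cutCost (E := E) (T := T) (hu.2 huR) (fun h => hv.1 h hvR)
    have := h₃ (h₂' (hu.2 huR)) (h₁' fun h => hv.1 h hvR)
    have := hR'.cutCost_le
    omega
  · exact h₁ hvR (h₂' (hu.2 huR))

def farSide (E : Multiset (Sym2 V)) (T : Set V) (A : Finset V) : Finset V :=
  Finset.univ \ (A ∪ cutBoundary E T A)

@[simp]
theorem mem_farSide : z ∈ farSide E T A ↔ z ∉ A ∧ z ∉ cutBoundary E T A := by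
  simp [farSide]

theorem Crosses.of_farSide (he : e ∈ E) (h : Crosses T (farSide E T A) e) : Crosses T A e := by
  have key {a b : V} (hab : s(a, b) ∈ E) (ha : a ∈ farSide E T A) (hbT : b ∈ T)
      (hb : b ∉ farSide E T A) : b ∈ A ∧ a ∈ T ∧ a ∉ A := by
    have hbA : b ∈ A := by
      by_contra hbA
      exact hb (mem_farSide.2 ⟨hbA, fun h => (mem_cutBoundary.1 h).2.1 hbT⟩)
    obtain ⟨haA, habd⟩ := mem_farSide.1 ha
    exact ⟨hbA, mem_of_adj_of_notMem_cutBoundary hbA (Sym2.eq_swap ▸ hab) haA habd, haA⟩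
  induction e using Sym2.ind with
  | _ a b =>
    rcases crosses_mk.1 h with ⟨ha, hbT, hb⟩ | ⟨hb, haT, ha⟩
    · exact crosses_mk.2 (.inr (key he ha hbT hb))
    · exact crosses_mk.2 (.inl (key (Sym2.eq_swap ▸ he) hb haT ha))

/-- A boundary vertex of the far side that lies in `A` is joined to a terminal of the far side,
by an edge that crosses from `A` but not from the far side. -/
theorem card_cutBoundary_farSide_le :
    (cutBoundary E T (farSide E T A)).card ≤ (cutBoundary E T A).card +
      E.countP (fun e => Crosses T A e ∧ ¬ Crosses T (farSide E T A) e) := by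
  set W := (cutBoundary E T (farSide E T A)).filter (· ∈ A)
  have hbd : cutBoundary E T (farSide E T A) ⊆ cutBoundary E T A ∪ W := by
    intro w hw
    by_cases hwA : w ∈ A
    · exact Finset.mem_union_right _ (Finset.mem_filter.2 ⟨hw, hwA⟩)
    · refine Finset.mem_union_left _ (by_contra fun h => ?_)
      exact (mem_cutBoundary.1 hw).1 (mem_farSide.2 ⟨hwA, h⟩)
  have hW : W.card ≤ E.countP (fun e => Crosses T A e ∧ ¬ Crosses T (farSide E T A) e) := by
    refine card_le_countP_of_forall_exists_edge fun w hw => ?_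
    obtain ⟨hw, hwA⟩ := Finset.mem_filter.1 hw
    obtain ⟨-, hwT, z, hz, hzw⟩ := mem_cutBoundary.1 hw
    obtain ⟨hzA, hzbd⟩ := mem_farSide.1 hz
    have hzT := mem_of_adj_of_notMem_cutBoundary hwA (Sym2.eq_swap ▸ hzw) hzA hzbd
    refine ⟨z, fun h => hzA (Finset.mem_filter.1 h).2, hzw, ?_⟩
    simp only [crosses_mk]
    grind
  exact (Finset.card_le_card hbd).trans ((Finset.card_union_le _ _).trans (by omega))

theorem cutCost_farSide_le : cutCost E T (farSide E T A) ≤ cutCost E T A := by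
  have := card_cutBoundary_farSide_le (E := E) (T := T) (A := A)
  have := Multiset.countP_add_countP_le_countP_of_disjoint (s := E)
    (p := Crosses T (farSide E T A)) (q := fun e => Crosses T A e ∧ ¬ Crosses T (farSide E T A) e)
    (p' := Crosses T A)
    (fun _ he h => Crosses.of_farSide he h) (fun _ _ h => h.1) fun _ _ h h' => h'.2 h
  unfold cutCost
  omega

end Uncrossing

section Contraction

variable {V : Type*} [DecidableEq V] {E : Multiset (Sym2 V)} {T : Set V} {A B : Finset V}
  {p q u v x : V}

@[simp]
theorem collapse_right : collapse p q q = p := by simp [collapse]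

theorem collapse_of_ne (h : x ≠ q) : collapse p q x = x := by simp [collapse, h]

theorem collapse_ne_right (hpq : p ≠ q) (x : V) : collapse p q x ≠ q := by
  by_cases hx : x = q
  · simp [hx, hpq]
  · rwa [collapse_of_ne hx]

theorem collapse_mem_iff {σ : Type*} [Membership V σ] {S : σ} (hp : p ∉ S) (hq : q ∉ S) :
    collapse p q x ∈ S ↔ x ∈ S := by
  by_cases hx : x = q
  · subst hx
    simp [hp, hq]
  · rw [collapse_of_ne hx]

theorem collapse_mem_erase_iff (hpq : p ≠ q) (hA : q ∈ A ↔ p ∈ A) :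
    collapse p q x ∈ A.erase q ↔ x ∈ A := by
  by_cases hx : x = q
  · subst hx
    simp [hpq, hA]
  · simp [collapse_of_ne hx, hx]

theorem collapse_mem_iff_mem_insert (hp : p ∈ B) : collapse p q x ∈ B ↔ x ∈ insert q B := by
  by_cases hx : x = q
  · subst hx
    simp [hp]
  · simp [collapse_of_ne hx, hx]

theorem image_collapse (X : Finset V) :
    X.image (collapse p q) = if q ∈ X then insert p (X.erase q) else X := by
  ext z
  simp only [Finset.mem_image, collapse]
  split_ifs
  · simp only [Finset.mem_insert, Finset.mem_erase]
    grind
  · grind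

theorem card_image_collapse_add (hpq : p ≠ q) (X : Finset V) :
    (X.image (collapse p q)).card + (if p ∈ X ∧ q ∈ X then 1 else 0) = X.card := by
  rw [image_collapse]
  by_cases hq : q ∈ X
  · have := Finset.card_pos.2 ⟨q, hq⟩
    by_cases hp : p ∈ X
    · simp [hp, hq, Finset.insert_eq_of_mem (Finset.mem_erase.2 ⟨hpq, hp⟩),
        Finset.card_erase_of_mem hq]
      omega
    · simp [hp, hq, Finset.card_insert_of_notMem, Finset.card_erase_of_mem hq]
      omega
  · simp [hq]

theorem mk_mem_contractE {a b : V} :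
    s(a, b) ∈ contractE E p q ↔
      a ≠ b ∧ ∃ x y, s(x, y) ∈ E ∧ collapse p q x = a ∧ collapse p q y = b := by
  simp only [contractE, Multiset.mem_filter, Multiset.mem_map, Sym2.mk_isDiag_iff]
  constructor
  · rintro ⟨⟨e, he, hea⟩, hab⟩
    induction e using Sym2.ind with
    | _ x y =>
      rcases Sym2.eq_iff.1 (Sym2.map_mk _ _ _ ▸ hea) with ⟨rfl, rfl⟩ | ⟨rfl, rfl⟩
      · exact ⟨hab, x, y, he, rfl, rfl⟩
      · exact ⟨hab, y, x, Sym2.eq_swap ▸ he, rfl, rfl⟩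
  · rintro ⟨hab, x, y, hxy, rfl, rfl⟩
    exact ⟨⟨s(x, y), hxy, Sym2.map_mk _ _ _⟩, hab⟩

theorem notMem_of_mem_contractE (hpq : p ≠ q) {e : Sym2 V} (he : e ∈ contractE E p q) :
    q ∉ e := by
  induction e using Sym2.ind with
  | _ a b =>
    obtain ⟨-, x, y, -, rfl, rfl⟩ := mk_mem_contractE.1 he
    simp [Sym2.mem_iff, (collapse_ne_right hpq x).symm, (collapse_ne_right hpq y).symm]

theorem countP_crosses_contractE (hp : p ∉ T) (hq : q ∉ T)
    (hAB : ∀ x, collapse p q x ∈ B ↔ x ∈ A) :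
    (contractE E p q).countP (Crosses T B) = E.countP (Crosses T A) := by
  rw [contractE, Multiset.countP_filter, Multiset.countP_map, ← Multiset.countP_eq_card_filter]
  refine Multiset.countP_congr rfl fun e _ => propext ?_
  rw [and_iff_left_of_imp Crosses.not_isDiag]
  exact crosses_map_iff hAB fun x => collapse_mem_iff hp hq

variable [Fintype V]

theorem cutBoundary_contractE (hp : p ∉ T) (hq : q ∉ T) (hAB : ∀ x, collapse p q x ∈ B ↔ x ∈ A) :
    cutBoundary (contractE E p q) T B = (cutBoundary E T A).image (collapse p q) := by
  have hT (x : V) : collapse p q x ∈ T ↔ x ∈ T := collapse_mem_iff hp hq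
  ext w
  simp only [Finset.mem_image, mem_cutBoundary, mk_mem_contractE]
  constructor
  · rintro ⟨hwB, hwT, -, hb, -, x, y, hxy, rfl, rfl⟩
    exact ⟨y, ⟨(hAB y).not.1 hwB, (hT y).not.1 hwT, x, (hAB x).1 hb, hxy⟩, rfl⟩
  · rintro ⟨y, ⟨hyA, hyT, x, hx, hxy⟩, rfl⟩
    have hyB := (hAB y).not.2 hyA
    have hxB := (hAB x).2 hx
    exact ⟨hyB, (hT y).not.2 hyT, _, hxB, fun h => hyB (h ▸ hxB), x, y, hxy, rfl, rfl⟩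

/-- With `A` the preimage of `B` under `collapse`, `collapse` maps the boundary of `A` onto the
boundary of `B` after contraction, merging `p` and `q`, and the crossing edges correspond one to
one. -/
theorem cutCost_eq_cutCost_contractE_add (hpq : p ≠ q) (hp : p ∉ T) (hq : q ∉ T)
    (hAB : ∀ x, collapse p q x ∈ B ↔ x ∈ A) :
    cutCost E T A = cutCost (contractE E p q) T B +
      if p ∈ cutBoundary E T A ∧ q ∈ cutBoundary E T A then 1 else 0 := by
  rw [cutCost, cutCost, cutBoundary_contractE hp hq hAB, countP_crosses_contractE hp hq hAB,
    ← card_image_collapse_add hpq (cutBoundary E T A)]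
  omega

theorem notMem_cutBoundary_contractE (hpq : p ≠ q) : q ∉ cutBoundary (contractE E p q) T B := by
  intro h
  obtain ⟨-, -, a, -, haq⟩ := mem_cutBoundary.1 h
  exact notMem_of_mem_contractE hpq haq (Sym2.mem_mk_right a q)

theorem cutCost_contractE_erase_le_self (hpq : p ≠ q) (hq : q ∉ T) :
    cutCost (contractE E p q) T (B.erase q) ≤ cutCost (contractE E p q) T B := by
  have hsub : cutBoundary (contractE E p q) T (B.erase q) ⊆ cutBoundary (contractE E p q) T B :=
    fun w hw => (Finset.mem_insert.1 (cutBoundary_erase_subset hw)).resolve_left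
      fun h => notMem_cutBoundary_contractE hpq (h ▸ hw)
  exact add_le_add (Finset.card_le_card hsub) (countP_crosses_erase_le hq)

theorem cutCost_insert_eq_cutCost_contractE (hpq : p ≠ q) (hp : p ∉ T) (hq : q ∉ T)
    (hpB : p ∈ B) : cutCost E T (insert q B) = cutCost (contractE E p q) T B := by
  rw [cutCost_eq_cutCost_contractE_add hpq hp hq fun _ => collapse_mem_iff_mem_insert hpB,
    if_neg fun h => (mem_cutBoundary.1 h.1).1 (Finset.mem_insert_of_mem hpB), add_zero]

/-- Removing from `A` the endpoint `z ∈ A` of `pq`: the other endpoint `z'` is already on the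
boundary of `A`, and after contraction `z` and `z'` become the same boundary vertex. -/
theorem cutCost_contractE_erase_le (hpq : p ≠ q) (hp : p ∉ T) (hq : q ∉ T) (he : s(p, q) ∈ E)
    {z z' : V} (hzz' : s(z, z') = s(p, q)) (hz : z ∈ A) (hz' : z' ∉ A) :
    cutCost (contractE E p q) T (A.erase z) ≤ cutCost E T A := by
  obtain ⟨hzT, hz'T, hpA, hqA, hc⟩ : z ∉ T ∧ z' ∉ T ∧ p ∉ A.erase z ∧ q ∉ A.erase z ∧
      collapse p q z' = collapse p q z := by
    rcases Sym2.eq_iff.1 hzz' with ⟨rfl, rfl⟩ | ⟨rfl, rfl⟩ <;> simp_all [collapse_of_ne hpq]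
  have hz'bd : z' ∈ cutBoundary E T A := mem_cutBoundary.2 ⟨hz', hz'T, z, hz, hzz' ▸ he⟩
  have hAB (x : V) : collapse p q x ∈ A.erase z ↔ x ∈ A.erase z :=
    collapse_mem_iff hpA hqA
  rw [cutCost, cutCost, cutBoundary_contractE hp hq hAB, countP_crosses_contractE hp hq hAB]
  refine add_le_add ?_ (countP_crosses_erase_le hzT)
  calc _ ≤ ((insert z (cutBoundary E T A)).image (collapse p q)).card :=
        Finset.card_le_card (Finset.image_subset_image cutBoundary_erase_subset)
    _ = ((cutBoundary E T A).image (collapse p q)).card := by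
        rw [Finset.image_insert, Finset.insert_eq_of_mem (Finset.mem_image.2 ⟨z', hz'bd, hc⟩)]
    _ ≤ _ := Finset.card_image_le

theorem elemConn_contractE_le (hpq : p ≠ q) (hp : p ∉ T) (hq : q ∉ T) (he : s(p, q) ∈ E)
    (hu : u ∈ T) (huv : u ≠ v) : elemConn (contractE E p q) T u v ≤ elemConn E T u v := by
  obtain ⟨A, hA⟩ := exists_isMinCut (E := E) hu huv
  have hcut {z : V} (hz : z ∉ T) :=
    elemConn_le_cutCost (E := contractE E p q) (T := T) (v := v)
      (Finset.mem_erase.2 ⟨fun (h : u = z) => hz (h ▸ hu), hA.mem_left⟩)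
      (fun h => hA.notMem_right (Finset.mem_of_mem_erase h))
  refine le_trans ?_ hA.cutCost_le
  by_cases hA' : q ∈ A ↔ p ∈ A
  · rw [cutCost_eq_cutCost_contractE_add hpq hp hq fun _ => collapse_mem_erase_iff hpq hA']
    exact (hcut hq).trans (Nat.le_add_right _ _)
  · by_cases hpA : p ∈ A
    · exact (hcut hp).trans (cutCost_contractE_erase_le hpq hp hq he rfl hpA (by tauto))
    · exact (hcut hq).trans (cutCost_contractE_erase_le hpq hp hq he Sym2.eq_swap (by tauto) hpA)

theorem mem_cutBoundary_of_cutCost_contractE_lt (hpq : p ≠ q) (hp : p ∉ T) (hq : q ∉ T)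
    (hpB : p ∉ B) (hqB : q ∉ B) (hu : u ∈ B) (hv : v ∉ B)
    (hlt : cutCost (contractE E p q) T B < elemConn E T u v) :
    p ∈ cutBoundary E T B ∧ q ∈ cutBoundary E T B ∧
      cutCost E T B = cutCost (contractE E p q) T B + 1 := by
  have h := cutCost_eq_cutCost_contractE_add (E := E) hpq hp hq fun _ =>
    collapse_mem_iff hpB hqB
  have := elemConn_le_cutCost (E := E) (T := T) hu hv
  split_ifs at h with hbd
  · exact ⟨hbd.1, hbd.2, h⟩
  · omega

theorem exists_cut_of_elemConn_contractE_lt (hpq : p ≠ q) (hp : p ∉ T) (hq : q ∉ T)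
    (hu : u ∈ T) (hv : v ∈ T) (huv : u ≠ v)
    (hlt : elemConn (contractE E p q) T u v < elemConn E T u v) :
    ∃ R, u ∈ R ∧ v ∉ R ∧ p ∉ R ∧ q ∉ R ∧
      cutCost (contractE E p q) T R ≤ elemConn (contractE E p q) T u v := by
  obtain ⟨B, hB⟩ := exists_isMinCut (E := contractE E p q) hu huv
  have huB : u ∈ B.erase q := Finset.mem_erase.2 ⟨fun h => hq (h ▸ hu), hB.mem_left⟩
  have hvB : v ∉ B.erase q := fun h => hB.notMem_right (Finset.mem_of_mem_erase h)
  have hB' := (cutCost_contractE_erase_le_self hpq hq).trans hB.cutCost_le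
  refine ⟨B.erase q, huB, hvB, fun hpB => ?_, Finset.notMem_erase q B, hB'⟩
  have := elemConn_le_cutCost (E := E) (T := T) (Finset.mem_insert_of_mem huB)
    fun h => (Finset.mem_insert.1 h).elim (fun (h : v = q) => hq (h ▸ hv)) hvB
  rw [cutCost_insert_eq_cutCost_contractE hpq hp hq hpB] at this
  omega

theorem exists_opposite_cut_contractE (hpq : p ≠ q) (hq : q ∉ T) {R : Finset V}
    (hpR : p ∈ cutBoundary (contractE E p q) T R) :
    ∃ R', p ∉ R' ∧ q ∉ R' ∧ cutCost (contractE E p q) T R' ≤ cutCost (contractE E p q) T R ∧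
      ∀ z ∈ T, z ∈ R' ↔ z ∉ R := by
  refine ⟨(farSide (contractE E p q) T R).erase q, by simp [hpR], Finset.notMem_erase _ _,
    (cutCost_contractE_erase_le_self hpq hq).trans cutCost_farSide_le, fun z hz => ?_⟩
  have : z ≠ q := fun h => hq (h ▸ hz)
  have : z ∉ cutBoundary (contractE E p q) T R := fun h => (mem_cutBoundary.1 h).2.1 hz
  simp only [Finset.mem_erase, mem_farSide]
  tauto

theorem exists_isMinCuts_of_elemConn_contractE_lt (hpq : p ≠ q) (hp : p ∉ T) (hq : q ∉ T)
    {x y : V} (hx : x ∈ T) (hy : y ∈ T) (hxy : x ≠ y)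
    (hlt : elemConn (contractE E p q) T x y < elemConn E T x y) :
    ∃ R R', IsMinCut E T x y R ∧ IsMinCut E T y x R' ∧
      p ∈ cutBoundary E T R ∧ q ∈ cutBoundary E T R ∧
      p ∈ cutBoundary E T R' ∧ q ∈ cutBoundary E T R' ∧ ∀ z ∈ T, z ∈ R' ↔ z ∉ R := by
  obtain ⟨R, hxR, hyR, hpR, hqR, hR⟩ := exists_cut_of_elemConn_contractE_lt hpq hp hq hx hy hxy hlt
  obtain ⟨hpbd, hqbd, hcostR⟩ :=
    mem_cutBoundary_of_cutCost_contractE_lt (E := E) hpq hp hq hpR hqR hxR hyR (by omega)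
  have hpbd' : p ∈ cutBoundary (contractE E p q) T R := by
    rw [cutBoundary_contractE hp hq fun _ => collapse_mem_iff hpR hqR]
    exact Finset.mem_image.2 ⟨p, hpbd, collapse_of_ne hpq⟩
  obtain ⟨R', hpR', hqR', hR', hRR'⟩ := exists_opposite_cut_contractE hpq hq hpbd'
  have hyR' : y ∈ R' := (hRR' y hy).2 hyR
  have hxR' : x ∉ R' := fun h => (hRR' x hx).1 h hxR
  have hyx := elemConn_comm E T y x
  obtain ⟨hpbd', hqbd', hcostR'⟩ :=
    mem_cutBoundary_of_cutCost_contractE_lt (E := E) hpq hp hq hpR' hqR' hyR' hxR' (by omega)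
  exact ⟨R, R', ⟨hxR, hyR, by omega⟩, ⟨hyR', hxR', by omega⟩, hpbd, hqbd, hpbd', hqbd', hRR'⟩

end Contraction

theorem elemConn_delete_or_contract_general {V : Type*} [Fintype V] [DecidableEq V]
    (E : Multiset (Sym2 V)) (T : Set V)
    (p q : V) (hp : p ∉ T) (hq : q ∉ T) (hpq : p ≠ q) (he : s(p, q) ∈ E) :
    (∀ u ∈ T, ∀ v ∈ T, u ≠ v →
        elemConn (E.erase s(p, q)) T u v = elemConn E T u v) ∨
    (∀ u ∈ T, ∀ v ∈ T, u ≠ v →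
        elemConn (contractE E p q) T u v = elemConn E T u v) := by
  by_contra! h
  obtain ⟨⟨u, hu, v, hv, huv, hdel⟩, x, hx, y, hy, hxy, hcon⟩ := h
  obtain ⟨S, hS, hSR⟩ := exists_isMinCut_of_elemConn_erase_lt hp hq hu huv
    ((elemConn_le_of_le (Multiset.erase_le _ _) hu huv).lt_of_ne hdel)
  obtain ⟨R, R', hR, hR', hpR, hqR, hpR', hqR', hRR'⟩ :=
    exists_isMinCuts_of_elemConn_contractE_lt hpq hp hq hx hy hxy
      ((elemConn_contractE_le hpq hp hq he hx hxy).lt_of_ne hcon)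
  exact hS.false_of_uncross hR hR' (hRR' u hu) (hRR' v hv) (hSR R hpR hqR) (hSR R' hpR' hqR')

/-- **Chekuri–Korula reduction theorem.** For an edge `pq` between two non-terminals,
deleting `pq` or contracting `pq` preserves the element-connectivity between every
pair of distinct terminals. -/
theorem elemConn_delete_or_contract {V : Type*} [Fintype V] [DecidableEq V]
    (E : Multiset (Sym2 V)) (T : Set V) (hloop : ∀ e ∈ E, ¬ e.IsDiag)
    (p q : V) (hp : p ∉ T) (hq : q ∉ T) (hpq : p ≠ q) (he : s(p, q) ∈ E) :
    (∀ u ∈ T, ∀ v ∈ T, u ≠ v →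
        elemConn (E.erase s(p, q)) T u v = elemConn E T u v) ∨
    (∀ u ∈ T, ∀ v ∈ T, u ≠ v →
        elemConn (contractE E p q) T u v = elemConn E T u v) :=
  elemConn_delete_or_contract_general E T p q hp hq hpq he

end
end

section
/- Given a hypergraph H = (V + s, E), there exists a hypergraph H* = (V + s, E*) that is a complete h-splitting-off at s from H (i.e., s is incident to no hyperedge of H* and H* is obtained from H by a finite sequence of merge-almost-disjoint-hyperedges-at-s and trim-hyperedge-at-s operations) such that λ_{H*}(u,v) = λ_H(u,v) for every pair of distinct vertices u, v ∈ V. -/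
/-!
Existence of a local-connectivity preserving complete h-splitting-off at a vertex
of a hypergraph (Bérczi–Chandrasekaran–Király–Kulkarni).

A hypergraph on the finite vertex type `W` (playing the role of `V + s`) is a
finite multiset `E : Multiset (Finset W)` of hyperedges, each of cardinality at
least 2.
-/

attribute [local instance] Classical.propDecidable

noncomputable section

/-- `|δ_E(S)|`: the number of hyperedges (with multiplicity) having at least one
vertex in `S` and at least one vertex outside `S`. -/
def hCut {W : Type*} [DecidableEq W] (E : Multiset (Finset W)) (S : Finset W) : ℕ :=
  Multiset.card (E.filter (fun e => (e ∩ S).Nonempty ∧ (e \ S).Nonempty))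

/-- The local connectivity `λ_E(x,y) = min { |δ_E(S)| : |S ∩ {x,y}| = 1 }`. -/
def lamH {W : Type*} [DecidableEq W] (E : Multiset (Finset W)) (x y : W) : ℕ :=
  sInf {n | ∃ S : Finset W, ((x ∈ S ∧ y ∉ S) ∨ (y ∈ S ∧ x ∉ S)) ∧ n = hCut E S}

/-- One h-splitting-off operation at `s`: either merge two hyperedges incident to `s`
that are almost-disjoint (they intersect exactly in `{s}`) into their union, or trim
`s` from a hyperedge incident to `s` (discarding the resulting set if it has fewer
than 2 vertices). -/
inductive SplitStep {W : Type*} [DecidableEq W] (s : W) :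
    Multiset (Finset W) → Multiset (Finset W) → Prop
  | merge (E : Multiset (Finset W)) (e f : Finset W)
      (he : e ∈ E) (hf : f ∈ E.erase e) (hef : e ∩ f = {s}) :
      SplitStep s E (((E.erase e).erase f) + {e ∪ f})
  | trim (E : Multiset (Finset W)) (e : Finset W)
      (he : e ∈ E) (hs : s ∈ e) (h2 : 2 ≤ (e.erase s).card) :
      SplitStep s E (E.erase e + {e.erase s})
  | trimDrop (E : Multiset (Finset W)) (e : Finset W)
      (he : e ∈ E) (hs : s ∈ e) (h2 : (e.erase s).card < 2) :
      SplitStep s E (E.erase e)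

namespace HSplitAux

set_option linter.unusedSectionVars false
set_option linter.unusedVariables false

variable {W : Type*} [Fintype W] [DecidableEq W]

/-- The crossing predicate. -/
abbrev cross (e S : Finset W) : Prop := (e ∩ S).Nonempty ∧ (e \ S).Nonempty

/-- Crossing indicator. -/
def ci (e S : Finset W) : ℕ := if cross e S then 1 else 0

lemma ci_pos {e S : Finset W} (h : cross e S) : ci e S = 1 := if_pos h
lemma ci_zero {e S : Finset W} (h : ¬ cross e S) : ci e S = 0 := if_neg h
lemma ci_le_one (e S : Finset W) : ci e S ≤ 1 := by unfold ci; split <;> omega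

/-- Cut via sum of indicators. -/
def mcut (E : Multiset (Finset W)) (S : Finset W) : ℕ := (E.map (fun e => ci e S)).sum

lemma mcut_cons (a : Finset W) (E : Multiset (Finset W)) (S : Finset W) :
    mcut (a ::ₘ E) S = ci a S + mcut E S := by simp [mcut]

lemma mcut_add (A B : Multiset (Finset W)) (S : Finset W) :
    mcut (A + B) S = mcut A S + mcut B S := by simp [mcut]

lemma mcut_singleton (a : Finset W) (S : Finset W) : mcut {a} S = ci a S := by simp [mcut]

lemma mcut_erase {a : Finset W} {E : Multiset (Finset W)} (h : a ∈ E) (S : Finset W) :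
    mcut E S = ci a S + mcut (E.erase a) S := by
  conv_lhs => rw [← Multiset.cons_erase h]
  rw [mcut_cons]

lemma hCut_eq_mcut (E : Multiset (Finset W)) (S : Finset W) : hCut E S = mcut E S := by
  induction E using Multiset.induction with
  | empty => simp [hCut, mcut]
  | cons a t ih =>
    rw [mcut_cons, ← ih]
    show Multiset.card (Multiset.filter _ (a ::ₘ t)) = _
    rw [Multiset.filter_cons, Multiset.card_add]
    have hia : Multiset.card
        (if (a ∩ S).Nonempty ∧ (a \ S).Nonempty then ({a} : Multiset (Finset W)) else 0)
        = ci a S := by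
      by_cases h : cross a S
      · rw [if_pos h, ci_pos h]; rfl
      · rw [if_neg h, ci_zero h]; rfl
    rw [hia, hCut]

lemma cross_compl (e S : Finset W) : cross e Sᶜ ↔ cross e S := by
  have h1 : e ∩ Sᶜ = e \ S := by ext x; simp
  have h2 : e \ Sᶜ = e ∩ S := by ext x; simp
  show (e ∩ Sᶜ).Nonempty ∧ (e \ Sᶜ).Nonempty ↔ _
  rw [h1, h2]
  exact and_comm

lemma ci_compl (e S : Finset W) : ci e Sᶜ = ci e S := by
  by_cases h : cross e S
  · rw [ci_pos h, ci_pos ((cross_compl e S).2 h)]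
  · rw [ci_zero h, ci_zero (fun hc => h ((cross_compl e S).1 hc))]

lemma hCut_compl (E : Multiset (Finset W)) (S : Finset W) : hCut E Sᶜ = hCut E S := by
  rw [hCut_eq_mcut, hCut_eq_mcut, mcut, mcut]
  congr 1
  exact Multiset.map_congr rfl (fun x _ => ci_compl x S)

lemma ci_submod (a A B : Finset W) :
    ci a (A ∩ B) + ci a (A ∪ B) ≤ ci a A + ci a B := by
  by_cases h1 : cross a (A ∩ B) <;> by_cases h2 : cross a (A ∪ B)
  · obtain ⟨⟨p, hp⟩, -⟩ := id h1
    obtain ⟨-, q, hq⟩ := id h2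
    simp only [Finset.mem_inter, Finset.mem_sdiff, Finset.mem_union, not_or] at hp hq
    have hA : cross a A := ⟨⟨p, Finset.mem_inter.2 ⟨hp.1, hp.2.1⟩⟩,
      ⟨q, Finset.mem_sdiff.2 ⟨hq.1, hq.2.1⟩⟩⟩
    have hB : cross a B := ⟨⟨p, Finset.mem_inter.2 ⟨hp.1, hp.2.2⟩⟩,
      ⟨q, Finset.mem_sdiff.2 ⟨hq.1, hq.2.2⟩⟩⟩
    rw [ci_pos h1, ci_pos h2, ci_pos hA, ci_pos hB]
  · obtain ⟨⟨p, hp⟩, q, hq⟩ := id h1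
    simp only [Finset.mem_inter, Finset.mem_sdiff] at hp hq
    have : cross a A ∨ cross a B := by
      by_cases hqA : q ∈ A
      · right
        have hqB : q ∉ B := fun hB => hq.2 ⟨hqA, hB⟩
        exact ⟨⟨p, Finset.mem_inter.2 ⟨hp.1, hp.2.2⟩⟩, ⟨q, Finset.mem_sdiff.2 ⟨hq.1, hqB⟩⟩⟩
      · left
        exact ⟨⟨p, Finset.mem_inter.2 ⟨hp.1, hp.2.1⟩⟩, ⟨q, Finset.mem_sdiff.2 ⟨hq.1, hqA⟩⟩⟩
    have b1 := ci_le_one a A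
    have b2 := ci_le_one a B
    rcases this with h | h
    · rw [ci_pos h1, ci_zero h2, ci_pos h]; omega
    · rw [ci_pos h1, ci_zero h2, ci_pos h]; omega
  · obtain ⟨⟨p, hp⟩, q, hq⟩ := id h2
    simp only [Finset.mem_union, Finset.mem_inter, Finset.mem_sdiff, not_or] at hp hq
    have : cross a A ∨ cross a B := by
      rcases hp.2 with hpA | hpB
      · left
        exact ⟨⟨p, Finset.mem_inter.2 ⟨hp.1, hpA⟩⟩, ⟨q, Finset.mem_sdiff.2 ⟨hq.1, hq.2.1⟩⟩⟩
      · right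
        exact ⟨⟨p, Finset.mem_inter.2 ⟨hp.1, hpB⟩⟩, ⟨q, Finset.mem_sdiff.2 ⟨hq.1, hq.2.2⟩⟩⟩
    have b1 := ci_le_one a A
    have b2 := ci_le_one a B
    rcases this with h | h
    · rw [ci_zero h1, ci_pos h2, ci_pos h]; omega
    · rw [ci_zero h1, ci_pos h2, ci_pos h]; omega
  · rw [ci_zero h1, ci_zero h2]; omega

lemma mcut_submod (E : Multiset (Finset W)) (A B : Finset W) :
    mcut E (A ∩ B) + mcut E (A ∪ B) ≤ mcut E A + mcut E B := by
  induction E using Multiset.induction with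
  | empty => simp [mcut]
  | cons a t ih =>
    rw [mcut_cons, mcut_cons, mcut_cons, mcut_cons]
    have := ci_submod a A B
    omega

lemma hCut_submod (E : Multiset (Finset W)) (A B : Finset W) :
    hCut E (A ∩ B) + hCut E (A ∪ B) ≤ hCut E A + hCut E B := by
  rw [hCut_eq_mcut, hCut_eq_mcut, hCut_eq_mcut, hCut_eq_mcut]
  exact mcut_submod E A B

lemma mcut_posimod (E : Multiset (Finset W)) (A B : Finset W) :
    mcut E (A \ B) + mcut E (B \ A) ≤ mcut E A + mcut E B := by
  have h := mcut_submod E A Bᶜ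
  have e1 : A ∩ Bᶜ = A \ B := by ext x; simp [and_comm]
  have e2 : A ∪ Bᶜ = (B \ A)ᶜ := by
    ext x
    simp only [Finset.mem_union, Finset.mem_compl, Finset.mem_sdiff, not_and, not_not]
    tauto
  have e3 : mcut E Bᶜ = mcut E B := by
    rw [mcut, mcut]; congr 1; exact Multiset.map_congr rfl (fun x _ => ci_compl x B)
  have e4 : mcut E (B \ A)ᶜ = mcut E (B \ A) := by
    rw [mcut, mcut]; congr 1; exact Multiset.map_congr rfl (fun x _ => ci_compl x (B \ A))
  rw [e1, e2, e3, e4] at h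
  omega

/-- The invariant: every cut value in the current hypergraph `E` is at least the
original local connectivity. -/
def Inv (E0 E : Multiset (Finset W)) (s : W) : Prop :=
  ∀ u v : W, u ≠ s → v ≠ s → ∀ S : Finset W, u ∈ S → v ∉ S → lamH E0 u v ≤ hCut E S

/-- Tight set: a set avoiding `s` whose cut equals the original connectivity of some
pair it separates. -/
def TightS (E0 E : Multiset (Finset W)) (s : W) (S : Finset W) : Prop :=
  s ∉ S ∧ ∃ u v : W, u ≠ s ∧ v ≠ s ∧ u ∈ S ∧ v ∉ S ∧ hCut E S = lamH E0 u v

lemma lamH_symm (E : Multiset (Finset W)) (x y : W) : lamH E x y = lamH E y x := by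
  unfold lamH
  congr 1
  ext n
  constructor <;> rintro ⟨S, h, rfl⟩ <;> exact ⟨S, h.symm, rfl⟩

lemma lamH_le (E : Multiset (Finset W)) {u v : W} {S : Finset W}
    (hu : u ∈ S) (hv : v ∉ S) : lamH E u v ≤ hCut E S :=
  Nat.sInf_le ⟨S, Or.inl ⟨hu, hv⟩, rfl⟩

/- crossing helper lemmas -/

lemma not_cross_small {f : Finset W} (h : f.card < 2) (S : Finset W) : ¬ cross f S := by
  rintro ⟨⟨p, hp⟩, q, hq⟩
  rw [Finset.mem_inter] at hp
  rw [Finset.mem_sdiff] at hq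
  have hpq : p ≠ q := by rintro rfl; exact hq.2 hp.2
  have := Finset.one_lt_card.2 ⟨p, hp.1, q, hq.1, hpq⟩
  omega

lemma cross_of_erase {s : W} {e S : Finset W} (h : cross (e.erase s) S) : cross e S := by
  obtain ⟨⟨p, hp⟩, q, hq⟩ := h
  rw [Finset.mem_inter] at hp
  rw [Finset.mem_sdiff] at hq
  exact ⟨⟨p, Finset.mem_inter.2 ⟨Finset.mem_of_mem_erase hp.1, hp.2⟩⟩,
    ⟨q, Finset.mem_sdiff.2 ⟨Finset.mem_of_mem_erase hq.1, hq.2⟩⟩⟩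

lemma erase_subset_or {s : W} {e S : Finset W} (hs : s ∈ e) (hc : cross e S)
    (hnc : ¬ cross (e.erase s) S) :
    (s ∉ S ∧ e.erase s ⊆ S) ∨ (s ∈ S ∧ ∀ a ∈ e.erase s, a ∉ S) := by
  obtain ⟨⟨p, hp⟩, q, hq⟩ := hc
  rw [Finset.mem_inter] at hp
  rw [Finset.mem_sdiff] at hq
  rw [not_and_or] at hnc
  rcases hnc with h | h
  · rw [Finset.not_nonempty_iff_eq_empty] at h
    right
    have hps : p = s := by
      by_contra hne
      have : p ∈ (e.erase s) ∩ S := Finset.mem_inter.2 ⟨Finset.mem_erase.2 ⟨hne, hp.1⟩, hp.2⟩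
      rw [h] at this
      exact absurd this (Finset.notMem_empty p)
    refine ⟨hps ▸ hp.2, fun a ha haS => ?_⟩
    have : a ∈ (e.erase s) ∩ S := Finset.mem_inter.2 ⟨ha, haS⟩
    rw [h] at this
    exact absurd this (Finset.notMem_empty a)
  · rw [Finset.not_nonempty_iff_eq_empty, Finset.sdiff_eq_empty_iff_subset] at h
    left
    have hqs : q = s := by
      by_contra hne
      exact hq.2 (h (Finset.mem_erase.2 ⟨hne, hq.1⟩))
    exact ⟨hqs ▸ hq.2, h⟩

lemma ci_erase_le {s : W} (e S : Finset W) : ci (e.erase s) S ≤ ci e S := by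
  by_cases h : cross (e.erase s) S
  · rw [ci_pos h, ci_pos (cross_of_erase h)]
  · rw [ci_zero h]; omega

lemma cross_union_left {e f S : Finset W} (h : cross e S) : cross (e ∪ f) S := by
  obtain ⟨⟨p, hp⟩, q, hq⟩ := h
  rw [Finset.mem_inter] at hp
  rw [Finset.mem_sdiff] at hq
  exact ⟨⟨p, Finset.mem_inter.2 ⟨Finset.mem_union_left f hp.1, hp.2⟩⟩,
    ⟨q, Finset.mem_sdiff.2 ⟨Finset.mem_union_left f hq.1, hq.2⟩⟩⟩

lemma cross_union_right {e f S : Finset W} (h : cross f S) : cross (e ∪ f) S := by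
  obtain ⟨⟨p, hp⟩, q, hq⟩ := h
  rw [Finset.mem_inter] at hp
  rw [Finset.mem_sdiff] at hq
  exact ⟨⟨p, Finset.mem_inter.2 ⟨Finset.mem_union_right e hp.1, hp.2⟩⟩,
    ⟨q, Finset.mem_sdiff.2 ⟨Finset.mem_union_right e hq.1, hq.2⟩⟩⟩

lemma ci_union_ge_left (e f S : Finset W) : ci e S ≤ ci (e ∪ f) S := by
  by_cases h : cross e S
  · rw [ci_pos h, ci_pos (cross_union_left h)]
  · rw [ci_zero h]; omega

lemma ci_union_ge_right (e f S : Finset W) : ci f S ≤ ci (e ∪ f) S := by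
  by_cases h : cross f S
  · rw [ci_pos h, ci_pos (cross_union_right h)]
  · rw [ci_zero h]; omega

lemma cross_union {s : W} {e f S : Finset W} (hse : s ∈ e) (hsf : s ∈ f)
    (h : cross (e ∪ f) S) : cross e S ∨ cross f S := by
  obtain ⟨⟨p, hp⟩, q, hq⟩ := h
  rw [Finset.mem_inter] at hp
  rw [Finset.mem_sdiff] at hq
  rw [Finset.mem_union] at hp hq
  by_cases hsS : s ∈ S
  · rcases hq.1 with h1 | h1
    · exact Or.inl ⟨⟨s, Finset.mem_inter.2 ⟨hse, hsS⟩⟩, ⟨q, Finset.mem_sdiff.2 ⟨h1, hq.2⟩⟩⟩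
    · exact Or.inr ⟨⟨s, Finset.mem_inter.2 ⟨hsf, hsS⟩⟩, ⟨q, Finset.mem_sdiff.2 ⟨h1, hq.2⟩⟩⟩
  · rcases hp.1 with h1 | h1
    · exact Or.inl ⟨⟨p, Finset.mem_inter.2 ⟨h1, hp.2⟩⟩, ⟨s, Finset.mem_sdiff.2 ⟨hse, hsS⟩⟩⟩
    · exact Or.inr ⟨⟨p, Finset.mem_inter.2 ⟨h1, hp.2⟩⟩, ⟨s, Finset.mem_sdiff.2 ⟨hsf, hsS⟩⟩⟩

lemma ci_union_le {s : W} {e f : Finset W} (hse : s ∈ e) (hsf : s ∈ f) (S : Finset W) :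
    ci (e ∪ f) S ≤ ci e S + ci f S := by
  by_cases h : cross (e ∪ f) S
  · rcases cross_union hse hsf h with hc | hc
    · rw [ci_pos h, ci_pos hc]; omega
    · rw [ci_pos h, ci_pos hc]; omega
  · rw [ci_zero h]; omega

/-! ### Effect of the operations on cuts -/

lemma rel_trim {e : Finset W} {E : Multiset (Finset W)} (he : e ∈ E) (s : W) (S : Finset W) :
    hCut (E.erase e + {e.erase s}) S + ci e S = hCut E S + ci (e.erase s) S := by
  rw [hCut_eq_mcut, hCut_eq_mcut, mcut_add, mcut_singleton, mcut_erase he]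
  ring

lemma rel_trimDrop {e : Finset W} {E : Multiset (Finset W)} (he : e ∈ E) (S : Finset W) :
    hCut (E.erase e) S + ci e S = hCut E S := by
  rw [hCut_eq_mcut, hCut_eq_mcut, mcut_erase he]
  ring

lemma rel_merge {e f : Finset W} {E : Multiset (Finset W)} (he : e ∈ E)
    (hf : f ∈ E.erase e) (S : Finset W) :
    hCut (((E.erase e).erase f) + {e ∪ f}) S + ci e S + ci f S
      = hCut E S + ci (e ∪ f) S := by
  rw [hCut_eq_mcut, hCut_eq_mcut, mcut_add, mcut_singleton, mcut_erase he S,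
    mcut_erase hf S]
  ring

lemma hCut_le_of_step {s : W} {E E' : Multiset (Finset W)} (h : SplitStep s E E')
    (S : Finset W) : hCut E' S ≤ hCut E S := by
  cases h with
  | merge e f he hf hef =>
    have hse : s ∈ e := by
      have : s ∈ e ∩ f := by rw [hef]; exact Finset.mem_singleton_self s
      exact (Finset.mem_inter.1 this).1
    have hsf : s ∈ f := by
      have : s ∈ e ∩ f := by rw [hef]; exact Finset.mem_singleton_self s
      exact (Finset.mem_inter.1 this).2
    have h1 := rel_merge he hf S
    have h2 := ci_union_le hse hsf S
    omega
  | trim e he hs h2 =>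
    have h1 := rel_trim he s S
    have h3 := ci_erase_le (s := s) e S
    omega
  | trimDrop e he hs h2 =>
    have h1 := rel_trimDrop he S
    omega

lemma lamH_le_of_step {s : W} {E E' : Multiset (Finset W)} (h : SplitStep s E E')
    {u v : W} (huv : u ≠ v) : lamH E' u v ≤ lamH E u v := by
  have hne : {n | ∃ S : Finset W, ((u ∈ S ∧ v ∉ S) ∨ (v ∈ S ∧ u ∉ S)) ∧ n = hCut E S}.Nonempty :=
    ⟨hCut E {u}, {u}, Or.inl ⟨Finset.mem_singleton_self u,
      fun hv => huv (Finset.mem_singleton.1 hv).symm⟩, rfl⟩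
  obtain ⟨S, hsep, heq⟩ := Nat.sInf_mem hne
  have h1 : lamH E' u v ≤ hCut E' S := Nat.sInf_le ⟨S, hsep, rfl⟩
  have h2 := hCut_le_of_step h S
  have h3 : lamH E u v = hCut E S := heq
  omega

lemma lamH_le_of_rtg {s : W} {E E' : Multiset (Finset W)}
    (h : Relation.ReflTransGen (SplitStep s) E E') {u v : W} (huv : u ≠ v) :
    lamH E' u v ≤ lamH E u v := by
  induction h with
  | refl => exact le_rfl
  | tail hab hbc ih => exact le_trans (lamH_le_of_step hbc huv) ih

/-! ### Invariant preservation -/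

lemma inv_trimlike {E0 E E' : Multiset (Finset W)} {s : W} (hInv : Inv E0 E s)
    {e : Finset W} (hs : s ∈ e)
    (hadm : ¬ ∃ T, TightS E0 E s T ∧ e.erase s ⊆ T)
    (hrel : ∀ S, hCut E' S + ci e S = hCut E S + ci (e.erase s) S) :
    Inv E0 E' s := by
  intro u v hu hv S huS hvS
  by_contra hlt
  push_neg at hlt
  have h1 := hInv u v hu hv S huS hvS
  have h2 := hrel S
  have hee := ci_erase_le (s := s) e S
  have hce : cross e S := by
    by_contra hc
    have h0 := ci_zero hc
    omega
  have hnce : ¬ cross (e.erase s) S := by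
    intro hc
    have := ci_pos hc
    have := ci_pos hce
    omega
  have heq : hCut E S = lamH E0 u v := by
    have := ci_pos hce
    have := ci_zero hnce
    omega
  rcases erase_subset_or hs hce hnce with ⟨hsS, hsub⟩ | ⟨hsS, hdis⟩
  · exact hadm ⟨S, ⟨hsS, u, v, hu, hv, huS, hvS, heq⟩, hsub⟩
  · refine hadm ⟨Sᶜ, ⟨by simp [hsS], v, u, hv, hu, by simp [hvS], by simp [huS], ?_⟩, ?_⟩
    · rw [hCut_compl, heq, lamH_symm]
    · intro a ha
      rw [Finset.mem_compl]
      exact hdis a ha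

lemma inv_merge {E0 E E' : Multiset (Finset W)} {s : W} (hInv : Inv E0 E s)
    {e f : Finset W} (hse : s ∈ e) (hsf : s ∈ f)
    (hadm : ¬ ∃ T, TightS E0 E s T ∧ ((e.erase s) ∩ T).Nonempty ∧ ((f.erase s) ∩ T).Nonempty)
    (hrel : ∀ S, hCut E' S + ci e S + ci f S = hCut E S + ci (e ∪ f) S) :
    Inv E0 E' s := by
  intro u v hu hv S huS hvS
  by_contra hlt
  push_neg at hlt
  have h1 := hInv u v hu hv S huS hvS
  have h2 := hrel S
  have hge := ci_union_ge_left e f S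
  have hgf := ci_union_ge_right e f S
  have hb1 := ci_le_one e S
  have hb2 := ci_le_one f S
  have hb3 := ci_le_one (e ∪ f) S
  have hcce : cross e S := by
    by_contra hc
    have := ci_zero hc
    omega
  have hccf : cross f S := by
    by_contra hc
    have := ci_zero hc
    omega
  have heq : hCut E S = lamH E0 u v := by
    have := ci_pos hcce
    have := ci_pos hccf
    omega
  by_cases hsS : s ∈ S
  · refine hadm ⟨Sᶜ, ⟨by simp [hsS], v, u, hv, hu, by simp [hvS], by simp [huS], ?_⟩, ?_, ?_⟩
    · rw [hCut_compl, heq, lamH_symm]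
    · obtain ⟨q, hq⟩ := hcce.2
      rw [Finset.mem_sdiff] at hq
      have hqs : q ≠ s := fun h => hq.2 (h ▸ hsS)
      exact ⟨q, Finset.mem_inter.2 ⟨Finset.mem_erase.2 ⟨hqs, hq.1⟩, Finset.mem_compl.2 hq.2⟩⟩
    · obtain ⟨q, hq⟩ := hccf.2
      rw [Finset.mem_sdiff] at hq
      have hqs : q ≠ s := fun h => hq.2 (h ▸ hsS)
      exact ⟨q, Finset.mem_inter.2 ⟨Finset.mem_erase.2 ⟨hqs, hq.1⟩, Finset.mem_compl.2 hq.2⟩⟩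
  · refine hadm ⟨S, ⟨hsS, u, v, hu, hv, huS, hvS, heq⟩, ?_, ?_⟩
    · obtain ⟨p, hp⟩ := hcce.1
      rw [Finset.mem_inter] at hp
      have hps : p ≠ s := fun h => hsS (h ▸ hp.2)
      exact ⟨p, Finset.mem_inter.2 ⟨Finset.mem_erase.2 ⟨hps, hp.1⟩, hp.2⟩⟩
    · obtain ⟨p, hp⟩ := hccf.1
      rw [Finset.mem_inter] at hp
      have hps : p ≠ s := fun h => hsS (h ▸ hp.2)
      exact ⟨p, Finset.mem_inter.2 ⟨Finset.mem_erase.2 ⟨hps, hp.1⟩, hp.2⟩⟩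

/-! ### Uncrossing: tight sets linked through an edge at `s` have tight union -/

lemma tight_union {E0 E : Multiset (Finset W)} {s : W} (hInv : Inv E0 E s)
    {X Y : Finset W} (hX : TightS E0 E s X) (hY : TightS E0 E s Y)
    {e : Finset W} (he : e ∈ E) (hse : s ∈ e)
    (heX : e.erase s ⊆ X) (hene : (e.erase s).Nonempty)
    (heY : ((e.erase s) ∩ Y).Nonempty) :
    TightS E0 E s (X ∪ Y) := by
  obtain ⟨hsX, x, x', hxs, hx's, hxX, hx'X, hXeq⟩ := hX
  obtain ⟨hsY, y, y', hys, hy's, hyY, hy'Y, hYeq⟩ := hY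
  have hsU : s ∉ X ∪ Y := by simp [hsX, hsY]
  -- Case ∩∪ : suitable separated pairs across X ∩ Y and X ∪ Y give tightness of X ∪ Y.
  have subA : ∀ a b c d : W, a ≠ s → b ≠ s → c ≠ s → d ≠ s →
      a ∈ X ∩ Y → b ∉ X ∩ Y → c ∈ X ∪ Y → d ∉ X ∪ Y →
      hCut E X + hCut E Y ≤ lamH E0 a b + lamH E0 c d →
      TightS E0 E s (X ∪ Y) := by
    intro a b c d has hbs hcs hds haM hbM hcU hdU hsum
    have h1 : lamH E0 a b ≤ hCut E (X ∩ Y) := hInv a b has hbs _ haM hbM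
    have h2 : lamH E0 c d ≤ hCut E (X ∪ Y) := hInv c d hcs hds _ hcU hdU
    have h3 := hCut_submod E X Y
    have hfin : hCut E (X ∪ Y) = lamH E0 c d := by omega
    exact ⟨hsU, c, d, hcs, hds, hcU, hdU, hfin⟩
  -- Case diff : suitable pairs across X \ Y and Y \ X lead to a contradiction via e.
  have subB : ∀ a b c d : W, a ≠ s → b ≠ s → c ≠ s → d ≠ s →
      a ∈ X \ Y → b ∉ X \ Y → c ∈ Y \ X → d ∉ Y \ X →
      hCut E X + hCut E Y ≤ lamH E0 a b + lamH E0 c d → False := by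
    intro a b c d has hbs hcs hds haM hbM hcU hdU hsum
    have h1 : lamH E0 a b ≤ hCut E (X \ Y) := hInv a b has hbs _ haM hbM
    have h2 : lamH E0 c d ≤ hCut E (Y \ X) := hInv c d hcs hds _ hcU hdU
    have hpos := mcut_posimod (E.erase e) X Y
    have g1 : hCut E X = ci e X + mcut (E.erase e) X := by
      rw [hCut_eq_mcut]; exact mcut_erase he X
    have g2 : hCut E Y = ci e Y + mcut (E.erase e) Y := by
      rw [hCut_eq_mcut]; exact mcut_erase he Y
    have g3 : hCut E (X \ Y) = ci e (X \ Y) + mcut (E.erase e) (X \ Y) := by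
      rw [hCut_eq_mcut]; exact mcut_erase he (X \ Y)
    have g4 : hCut E (Y \ X) = ci e (Y \ X) + mcut (E.erase e) (Y \ X) := by
      rw [hCut_eq_mcut]; exact mcut_erase he (Y \ X)
    have cX : ci e X = 1 := by
      apply ci_pos
      obtain ⟨p, hp⟩ := hene
      exact ⟨⟨p, Finset.mem_inter.2 ⟨Finset.mem_of_mem_erase hp, heX hp⟩⟩,
        ⟨s, Finset.mem_sdiff.2 ⟨hse, hsX⟩⟩⟩
    have cY : ci e Y = 1 := by
      apply ci_pos
      obtain ⟨p, hp⟩ := heY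
      rw [Finset.mem_inter] at hp
      exact ⟨⟨p, Finset.mem_inter.2 ⟨Finset.mem_of_mem_erase hp.1, hp.2⟩⟩,
        ⟨s, Finset.mem_sdiff.2 ⟨hse, hsY⟩⟩⟩
    have cYX : ci e (Y \ X) = 0 := by
      apply ci_zero
      rintro ⟨⟨p, hp⟩, -⟩
      rw [Finset.mem_inter, Finset.mem_sdiff] at hp
      by_cases hps : p = s
      · exact hsY (hps ▸ hp.2.1)
      · exact hp.2.2 (heX (Finset.mem_erase.2 ⟨hps, hp.1⟩))
    have cXY := ci_le_one e (X \ Y)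
    omega
  -- dispatch on the positions of the four witnesses
  have sx := lamH_symm E0 x x'
  have sy := lamH_symm E0 y y'
  by_cases hxY : x ∈ Y <;> by_cases hx'Y : x' ∈ Y <;>
    by_cases hyX : y ∈ X <;> by_cases hy'X : y' ∈ X
  -- (1,1): x∈Y, x'∈Y, y∈X, y'∈X : diff branch, contradiction
  · exact (subB y' y x' x hy's hys hx's hxs
      (Finset.mem_sdiff.2 ⟨hy'X, hy'Y⟩) (by simp [hyY]) (Finset.mem_sdiff.2 ⟨hx'Y, hx'X⟩)
      (by simp [hxX]) (by omega)).elim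
  -- (1,2): x∈Y, x'∈Y, y∈X, y'∉X : SubA with (x,x') on ∩ and (y,y') on ∪
  · exact subA x x' y y' hxs hx's hys hy's (Finset.mem_inter.2 ⟨hxX, hxY⟩)
      (by simp [hx'X]) (Finset.mem_union_left _ hyX) (by simp [hy'X, hy'Y]) (by omega)
  -- (1,3): x∈Y, x'∈Y, y∉X, y'∈X : diff branch
  · exact (subB y' y x' x hy's hys hx's hxs
      (Finset.mem_sdiff.2 ⟨hy'X, hy'Y⟩) (by simp [hyX]) (Finset.mem_sdiff.2 ⟨hx'Y, hx'X⟩)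
      (by simp [hxX]) (by omega)).elim
  -- (1,4): x∈Y, x'∈Y, y∉X, y'∉X : SubA (x,x') on ∩, (y,y') on ∪
  · exact subA x x' y y' hxs hx's hys hy's (Finset.mem_inter.2 ⟨hxX, hxY⟩)
      (by simp [hx'X]) (Finset.mem_union_right _ hyY) (by simp [hy'X, hy'Y]) (by omega)
  -- (2,1): x∈Y, x'∉Y, y∈X, y'∈X : SubA (y,y') on ∩, (x,x') on ∪
  · exact subA y y' x x' hys hy's hxs hx's (Finset.mem_inter.2 ⟨hyX, hyY⟩)
      (by simp [hy'Y]) (Finset.mem_union_left _ hxX) (by simp [hx'X, hx'Y]) (by omega)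
  -- (2,2): SubA (x,x') on ∩, (y,y') on ∪
  · exact subA x x' y y' hxs hx's hys hy's (Finset.mem_inter.2 ⟨hxX, hxY⟩)
      (by simp [hx'X]) (Finset.mem_union_left _ hyX) (by simp [hy'X, hy'Y]) (by omega)
  -- (2,3): x∈Y, x'∉Y, y∉X, y'∈X : doubling
  · by_cases hcmp : lamH E0 y y' ≤ lamH E0 x x'
    · exact subA x x' x x' hxs hx's hxs hx's (Finset.mem_inter.2 ⟨hxX, hxY⟩)
        (by simp [hx'X]) (Finset.mem_union_left _ hxX) (by simp [hx'X, hx'Y]) (by omega)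
    · exact (subB y' y y y' hy's hys hys hy's
        (Finset.mem_sdiff.2 ⟨hy'X, hy'Y⟩) (by simp [hyX]) (Finset.mem_sdiff.2 ⟨hyY, hyX⟩)
        (by simp [hy'X]) (by omega)).elim
  -- (2,4): SubA (x,x') on ∩, (y,y') on ∪
  · exact subA x x' y y' hxs hx's hys hy's (Finset.mem_inter.2 ⟨hxX, hxY⟩)
      (by simp [hx'X]) (Finset.mem_union_right _ hyY) (by simp [hy'X, hy'Y]) (by omega)
  -- (3,1): x∉Y, x'∈Y, y∈X, y'∈X : diff branch
  · exact (subB y' y x' x hy's hys hx's hxs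
      (Finset.mem_sdiff.2 ⟨hy'X, hy'Y⟩) (by simp [hyY]) (Finset.mem_sdiff.2 ⟨hx'Y, hx'X⟩)
      (by simp [hxX]) (by omega)).elim
  -- (3,2): x∉Y, x'∈Y, y∈X, y'∉X : doubling
  · by_cases hcmp : lamH E0 x x' ≤ lamH E0 y y'
    · exact subA y y' y y' hys hy's hys hy's (Finset.mem_inter.2 ⟨hyX, hyY⟩)
        (by simp [hy'X]) (Finset.mem_union_left _ hyX) (by simp [hy'X, hy'Y]) (by omega)
    · exact (subB x x' x' x hxs hx's hx's hxs
        (Finset.mem_sdiff.2 ⟨hxX, hxY⟩) (by simp [hx'X]) (Finset.mem_sdiff.2 ⟨hx'Y, hx'X⟩)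
        (by simp [hxX]) (by omega)).elim
  -- (3,3): x∉Y, x'∈Y, y∉X, y'∈X : diff branch
  · exact (subB x x' y y' hxs hx's hys hy's
      (Finset.mem_sdiff.2 ⟨hxX, hxY⟩) (by simp [hx'X]) (Finset.mem_sdiff.2 ⟨hyY, hyX⟩)
      (by simp [hy'X]) (by omega)).elim
  -- (3,4): x∉Y, x'∈Y, y∉X, y'∉X : diff branch
  · exact (subB x x' y y' hxs hx's hys hy's
      (Finset.mem_sdiff.2 ⟨hxX, hxY⟩) (by simp [hx'X]) (Finset.mem_sdiff.2 ⟨hyY, hyX⟩)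
      (by simp [hy'Y]) (by omega)).elim
  -- (4,1): x∉Y, x'∉Y, y∈X, y'∈X : SubA (y,y') on ∩, (x,x') on ∪
  · exact subA y y' x x' hys hy's hxs hx's (Finset.mem_inter.2 ⟨hyX, hyY⟩)
      (by simp [hy'Y]) (Finset.mem_union_left _ hxX) (by simp [hx'X, hx'Y]) (by omega)
  -- (4,2): SubA (y,y') on ∩, (x,x') on ∪
  · exact subA y y' x x' hys hy's hxs hx's (Finset.mem_inter.2 ⟨hyX, hyY⟩)
      (by simp [hy'X]) (Finset.mem_union_left _ hxX) (by simp [hx'X, hx'Y]) (by omega)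
  -- (4,3): diff branch
  · exact (subB x x' y y' hxs hx's hys hy's
      (Finset.mem_sdiff.2 ⟨hxX, hxY⟩) (by simp [hx'X]) (Finset.mem_sdiff.2 ⟨hyY, hyX⟩)
      (by simp [hy'X]) (by omega)).elim
  -- (4,4): diff branch
  · exact (subB x x' y y' hxs hx's hys hy's
      (Finset.mem_sdiff.2 ⟨hxX, hxY⟩) (by simp [hx'X]) (Finset.mem_sdiff.2 ⟨hyY, hyX⟩)
      (by simp [hy'Y]) (by omega)).elim

lemma mcut_mono_of {F : Multiset (Finset W)} {A B : Finset W}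
    (h : ∀ f ∈ F, ci f A ≤ ci f B) : mcut F A ≤ mcut F B := by
  induction F using Multiset.induction with
  | empty => simp [mcut]
  | cons a t ih =>
    rw [mcut_cons, mcut_cons]
    have h1 := h a (Multiset.mem_cons_self a t)
    have h2 := ih (fun f hf => h f (Multiset.mem_cons_of_mem hf))
    omega

/-- If every hyperedge at `s` has its non-`s` part inside a single tight set, we get a
contradiction with the invariant. -/
lemma contra_all_inside {E0 E : Multiset (Finset W)} {s : W} (hInv : Inv E0 E s)
    {M : Finset W} (hM : TightS E0 E s M)
    (hall : ∀ f ∈ E, s ∈ f → f.erase s ⊆ M)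
    {e0 : Finset W} (he0 : e0 ∈ E) (hs0 : s ∈ e0) (hne0 : (e0.erase s).Nonempty) :
    False := by
  obtain ⟨hsM, u, v, hus, hvs, huM, hvM, heq⟩ := hM
  have hkey : hCut E (M ∪ {s}) < hCut E M := by
    rw [hCut_eq_mcut, hCut_eq_mcut, mcut_erase he0 (M ∪ {s}), mcut_erase he0 M]
    have h0 : ci e0 (M ∪ {s}) = 0 := by
      apply ci_zero
      rintro ⟨-, q, hq⟩
      rw [Finset.mem_sdiff, Finset.mem_union, Finset.mem_singleton] at hq
      rcases hq with ⟨hqe, hq2⟩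
      rw [not_or] at hq2
      exact hq2.1 (hall e0 he0 hs0 (Finset.mem_erase.2 ⟨hq2.2, hqe⟩))
    have h1 : ci e0 M = 1 := by
      apply ci_pos
      obtain ⟨p, hp⟩ := hne0
      exact ⟨⟨p, Finset.mem_inter.2 ⟨Finset.mem_of_mem_erase hp, hall e0 he0 hs0 hp⟩⟩,
        ⟨s, Finset.mem_sdiff.2 ⟨hs0, hsM⟩⟩⟩
    have hrest : mcut (E.erase e0) (M ∪ {s}) ≤ mcut (E.erase e0) M := by
      apply mcut_mono_of
      intro f hf
      have hfE : f ∈ E := Multiset.mem_of_mem_erase hf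
      by_cases hsf : s ∈ f
      · have hsub := hall f hfE hsf
        have : ¬ cross f (M ∪ {s}) := by
          rintro ⟨-, q, hq⟩
          rw [Finset.mem_sdiff, Finset.mem_union, Finset.mem_singleton] at hq
          rcases hq with ⟨hqe, hq2⟩
          rw [not_or] at hq2
          exact hq2.1 (hsub (Finset.mem_erase.2 ⟨hq2.2, hqe⟩))
        rw [ci_zero this]
        omega
      · have e1 : f ∩ (M ∪ {s}) = f ∩ M := by
          ext a
          simp only [Finset.mem_inter, Finset.mem_union, Finset.mem_singleton]
          constructor
          · rintro ⟨haf, haM | rfl⟩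
            · exact ⟨haf, haM⟩
            · exact absurd haf hsf
          · rintro ⟨haf, haM⟩
            exact ⟨haf, Or.inl haM⟩
        have e2 : f \ (M ∪ {s}) = f \ M := by
          ext a
          simp only [Finset.mem_sdiff, Finset.mem_union, Finset.mem_singleton, not_or]
          constructor
          · rintro ⟨haf, h1, h2⟩
            exact ⟨haf, h1⟩
          · rintro ⟨haf, h1⟩
            exact ⟨haf, h1, fun h => hsf (h ▸ haf)⟩
        have : cross f (M ∪ {s}) ↔ cross f M := by
          show (f ∩ (M ∪ {s})).Nonempty ∧ (f \ (M ∪ {s})).Nonempty ↔ _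
          rw [e1, e2]
        by_cases hc : cross f M
        · rw [ci_pos hc, ci_pos (this.2 hc)]
        · rw [ci_zero hc, ci_zero (fun hh => hc (this.1 hh))]
    omega
  have hv2 : v ∈ (M ∪ {s})ᶜ := by
    rw [Finset.mem_compl, Finset.mem_union, Finset.mem_singleton]
    rw [not_or]
    exact ⟨hvM, hvs⟩
  have hu2 : u ∉ (M ∪ {s})ᶜ := by
    rw [Finset.mem_compl, not_not, Finset.mem_union]
    exact Or.inl huM
  have hinv2 := hInv v u hvs hus _ hv2 hu2
  rw [hCut_compl] at hinv2
  have hsymm := lamH_symm E0 v u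
  omega

/-- Degree of `s`: number of hyperedges containing `s`. -/
def dsum (s : W) (E : Multiset (Finset W)) : ℕ :=
  (E.map (fun e => if s ∈ e then 1 else 0)).sum

lemma dsum_cons (s : W) (a : Finset W) (E : Multiset (Finset W)) :
    dsum s (a ::ₘ E) = (if s ∈ a then 1 else 0) + dsum s E := by simp [dsum]

lemma dsum_add (s : W) (A B : Multiset (Finset W)) :
    dsum s (A + B) = dsum s A + dsum s B := by simp [dsum]

lemma dsum_singleton (s : W) (a : Finset W) :
    dsum s ({a} : Multiset (Finset W)) = if s ∈ a then 1 else 0 := by simp [dsum]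

lemma dsum_erase {s : W} {a : Finset W} {E : Multiset (Finset W)} (h : a ∈ E) :
    dsum s E = (if s ∈ a then 1 else 0) + dsum s (E.erase a) := by
  conv_lhs => rw [← Multiset.cons_erase h]
  rw [dsum_cons]

lemma dsum_eq_zero {s : W} {E : Multiset (Finset W)} (h : dsum s E = 0) :
    ∀ e ∈ E, s ∉ e := by
  intro e he hse
  have := dsum_erase (s := s) he
  rw [if_pos hse] at this
  omega

/-- If there is an edge at `s`, some admissible splitting step exists. -/
lemma exists_step (E0 : Multiset (Finset W)) (s : W) (E : Multiset (Finset W))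
    (hcard : ∀ e ∈ E, 2 ≤ e.card) (hInv : Inv E0 E s)
    (hd : ∃ e ∈ E, s ∈ e) :
    ∃ E' : Multiset (Finset W), SplitStep s E E' ∧ Inv E0 E' s ∧
      (∀ e ∈ E', 2 ≤ e.card) ∧ dsum s E' < dsum s E := by
  by_cases hA : ∃ e ∈ E, s ∈ e ∧ ¬ ∃ T, TightS E0 E s T ∧ e.erase s ⊆ T
  · -- an admissible trim exists
    obtain ⟨e, he, hse, hadm⟩ := hA
    by_cases h2 : 2 ≤ (e.erase s).card
    · refine ⟨_, SplitStep.trim E e he hse h2, ?_, ?_, ?_⟩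
      · exact inv_trimlike hInv hse hadm (fun S => rel_trim he s S)
      · intro f hf
        rw [Multiset.mem_add] at hf
        rcases hf with hf | hf
        · exact hcard f (Multiset.mem_of_mem_erase hf)
        · rw [Multiset.mem_singleton] at hf
          exact hf ▸ h2
      · rw [dsum_add, dsum_singleton, dsum_erase (s := s) he, if_pos hse,
          if_neg (fun h => (Finset.notMem_erase s e) h)]
        omega
    · refine ⟨_, SplitStep.trimDrop E e he hse (lt_of_not_ge h2), ?_, ?_, ?_⟩
      · apply inv_trimlike hInv hse hadm
        intro S
        have h1 := rel_trimDrop he S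
        have h0 : ci (e.erase s) S = 0 :=
          ci_zero (not_cross_small (lt_of_not_ge h2) S)
        omega
      · exact fun f hf => hcard f (Multiset.mem_of_mem_erase hf)
      · rw [dsum_erase (s := s) he, if_pos hse]
        omega
  · -- no admissible trim: find an admissible merge
    push_neg at hA
    obtain ⟨e0, he0, hs0⟩ := hd
    have hne0 : (e0.erase s).Nonempty := by
      rw [← Finset.card_pos, Finset.card_erase_of_mem hs0]
      have := hcard e0 he0
      omega
    obtain ⟨T0, hT0, hsub0⟩ := hA e0 he0 hs0
    -- pick a maximum-cardinality tight set containing e0.erase s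
    have hPne : ((Finset.univ : Finset (Finset W)).filter
        (fun T => TightS E0 E s T ∧ e0.erase s ⊆ T)).Nonempty :=
      ⟨T0, Finset.mem_filter.2 ⟨Finset.mem_univ _, hT0, hsub0⟩⟩
    obtain ⟨M, hMmem, hMmax'⟩ := Finset.exists_max_image _ Finset.card hPne
    obtain ⟨-, hMt, hMsub⟩ := Finset.mem_filter.1 hMmem
    have hMmax : ∀ T, TightS E0 E s T → e0.erase s ⊆ T → T.card ≤ M.card := by
      intro T h1 h2
      exact hMmax' T (Finset.mem_filter.2 ⟨Finset.mem_univ _, h1, h2⟩)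
    by_cases hB : ∃ f ∈ E, s ∈ f ∧ (f.erase s ∩ M) = ∅
    · obtain ⟨f, hf, hsf, hdisj⟩ := hB
      have hfe : f ≠ e0 := by
        rintro rfl
        obtain ⟨p, hp⟩ := hne0
        have : p ∈ f.erase s ∩ M := Finset.mem_inter.2 ⟨hp, hMsub hp⟩
        rw [hdisj] at this
        exact absurd this (Finset.notMem_empty p)
      have hfE : f ∈ E.erase e0 := (Multiset.mem_erase_of_ne hfe).2 hf
      have hef : e0 ∩ f = {s} := by
        ext a
        rw [Finset.mem_inter, Finset.mem_singleton]
        constructor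
        · rintro ⟨ha1, ha2⟩
          by_contra hne
          have : a ∈ f.erase s ∩ M :=
            Finset.mem_inter.2 ⟨Finset.mem_erase.2 ⟨hne, ha2⟩,
              hMsub (Finset.mem_erase.2 ⟨hne, ha1⟩)⟩
          rw [hdisj] at this
          exact absurd this (Finset.notMem_empty a)
        · rintro rfl
          exact ⟨hs0, hsf⟩
      refine ⟨_, SplitStep.merge E e0 f he0 hfE hef, ?_, ?_, ?_⟩
      · apply inv_merge hInv hs0 hsf ?_ (fun S => rel_merge he0 hfE S)
        rintro ⟨T, hTt, hTe, hTf⟩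
        have hun : TightS E0 E s (M ∪ T) :=
          tight_union hInv hMt hTt he0 hs0 hMsub hne0 hTe
        have hle : (M ∪ T).card ≤ M.card :=
          hMmax _ hun (hMsub.trans Finset.subset_union_left)
        have hMeq : M = M ∪ T :=
          Finset.eq_of_subset_of_card_le Finset.subset_union_left hle
        obtain ⟨q, hq⟩ := hTf
        rw [Finset.mem_inter] at hq
        have hqM : q ∈ M := by
          rw [hMeq]
          exact Finset.mem_union_right _ hq.2
        have : q ∈ f.erase s ∩ M := Finset.mem_inter.2 ⟨hq.1, hqM⟩
        rw [hdisj] at this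
        exact absurd this (Finset.notMem_empty q)
      · intro g hg
        rw [Multiset.mem_add] at hg
        rcases hg with hg | hg
        · exact hcard g (Multiset.mem_of_mem_erase (Multiset.mem_of_mem_erase hg))
        · rw [Multiset.mem_singleton] at hg
          subst hg
          exact le_trans (hcard e0 he0) (Finset.card_le_card Finset.subset_union_left)
      · rw [dsum_add, dsum_singleton, dsum_erase (s := s) he0, if_pos hs0,
          dsum_erase (s := s) hfE, if_pos hsf,
          if_pos (Finset.mem_union_left _ hs0)]
        omega
    · push_neg at hB
      exfalso
      have hall : ∀ f ∈ E, s ∈ f → f.erase s ⊆ M := by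
        intro f hf hsf
        obtain ⟨T, hTt, hTsub⟩ := hA f hf hsf
        have hnef : (f.erase s).Nonempty := by
          rw [← Finset.card_pos, Finset.card_erase_of_mem hsf]
          have := hcard f hf
          omega
        have hmeets : ((f.erase s) ∩ M).Nonempty :=
          hB f hf hsf
        have hun : TightS E0 E s (T ∪ M) :=
          tight_union hInv hTt hMt hf hsf hTsub hnef hmeets
        have hle : (T ∪ M).card ≤ M.card :=
          hMmax _ hun (hMsub.trans Finset.subset_union_right)
        have hMeq : M = T ∪ M :=
          Finset.eq_of_subset_of_card_le Finset.subset_union_right hle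
        intro a ha
        rw [hMeq]
        exact Finset.mem_union_left _ (hTsub ha)
      exact contra_all_inside hInv hMt hall he0 hs0 hne0

/-- Main induction on the degree of `s`. -/
lemma main_aux (E0 : Multiset (Finset W)) (s : W) :
    ∀ n : ℕ, ∀ E : Multiset (Finset W), dsum s E = n →
      (∀ e ∈ E, 2 ≤ e.card) → Inv E0 E s →
      ∃ Estar : Multiset (Finset W),
        Relation.ReflTransGen (SplitStep s) E Estar ∧
        (∀ e ∈ Estar, s ∉ e) ∧ Inv E0 Estar s := by
  intro n
  induction n using Nat.strong_induction_on with
  | _ n ih =>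
    intro E hn hcard hInv
    by_cases h0 : ∃ e ∈ E, s ∈ e
    · obtain ⟨E', hstep, hInv', hcard', hlt⟩ := exists_step E0 s E hcard hInv h0
      obtain ⟨Estar, hrtg, hfree, hInv''⟩ :=
        ih (dsum s E') (by omega) E' rfl hcard' hInv'
      exact ⟨Estar, Relation.ReflTransGen.head hstep hrtg, hfree, hInv''⟩
    · push_neg at h0
      exact ⟨E, Relation.ReflTransGen.refl, h0, hInv⟩

end HSplitAux

/-- **Complete h-splitting-off preserving local connectivity.** -/
theorem complete_h_splitting_off {W : Type*} [Fintype W] [DecidableEq W]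
    (s : W) (E : Multiset (Finset W)) (hcard : ∀ e ∈ E, 2 ≤ e.card) :
    ∃ Estar : Multiset (Finset W),
      Relation.ReflTransGen (SplitStep s) E Estar ∧
      (∀ e ∈ Estar, s ∉ e) ∧
      ∀ u v : W, u ≠ s → v ≠ s → u ≠ v → lamH Estar u v = lamH E u v := by
  classical
  have hInv0 : HSplitAux.Inv E E s := by
    intro u v hu hv S huS hvS
    exact Nat.sInf_le ⟨S, Or.inl ⟨huS, hvS⟩, rfl⟩
  obtain ⟨Estar, hrtg, hfree, hInv⟩ :=
    HSplitAux.main_aux E s (HSplitAux.dsum s E) E rfl hcard hInv0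
  refine ⟨Estar, hrtg, hfree, fun u v hu hv huv => le_antisymm ?_ ?_⟩
  · exact HSplitAux.lamH_le_of_rtg hrtg huv
  · have hne : {n | ∃ S : Finset W,
        ((u ∈ S ∧ v ∉ S) ∨ (v ∈ S ∧ u ∉ S)) ∧ n = hCut Estar S}.Nonempty :=
      ⟨hCut Estar {u}, {u}, Or.inl ⟨Finset.mem_singleton_self u,
        fun h => huv (Finset.mem_singleton.1 h).symm⟩, rfl⟩
    apply le_csInf hne
    rintro n ⟨S, hsep | hsep, rfl⟩
    · exact hInv u v hu hv S hsep.1 hsep.2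
    · have h := hInv v u hv hu S hsep.1 hsep.2
      have := HSplitAux.lamH_symm E v u
      omega

end
end

section
/- Let G = (V, E) be an undirected multigraph with terminal set T ⊆ V, and let s ∈ T be a terminal of degree d whose d incident edges join s to d distinct non-terminal vertices e₁, …, e_d. Let G₁ be the graph obtained from G by deleting s, adding d new non-terminal vertices s₁, …, s_d forming a clique (an edge between every pair s_i, s_j with i ≠ j), and adding the edge {e_i, s_i} for every i ∈ [d]. Then κ'_{(G₁, T \ {s})}(u,v) = κ'_{(G, T)}(u,v) for every pair of distinct terminals u, v ∈ T \ {s}. -/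
/-!
Replacing a terminal `s` of degree `d` (whose incident edges go to `d` distinct
non-terminals) by a clique of `d` new non-terminal vertices preserves the
element-connectivity between all remaining terminal pairs.

A multigraph on `V` is a finite multiset `E : Multiset (Sym2 V)` of unordered
pairs of distinct vertices.  The new graph `G₁` lives on the vertex type
`V ⊕ Fin d`, where `Sum.inr i` is the new clique vertex `sᵢ`.
-/

attribute [local instance] Classical.propDecidable

noncomputable section

/-- The edge multiset of the graph `G₁` obtained from `G` by deleting the terminal `s`
(whose incident edges join it to the distinct non-terminals `w 0, …, w (d-1)`),
adding `d` new vertices `s₁, …, s_d` forming a clique, and adding the edge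
`{w i, sᵢ}` for each `i`. -/
def cliqueReplace {V : Type*} [Fintype V] [DecidableEq V] (E : Multiset (Sym2 V))
    (s : V) (d : ℕ) (w : Fin d → V) : Multiset (Sym2 (V ⊕ Fin d)) :=
  (E.filter (fun e => s ∉ e)).map (Sym2.map (Sum.inl : V → V ⊕ Fin d))
    + ((Finset.univ : Finset (Sym2 (Fin d))).filter (fun e => ¬ e.IsDiag)).val.map
        (Sym2.map (Sum.inr : Fin d → V ⊕ Fin d))
    + (Finset.univ : Finset (Fin d)).val.map
        (fun i => s(Sum.inl (w i), (Sum.inr i : V ⊕ Fin d)))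

section ElemHelpers
set_option linter.unusedSectionVars false
open Multiset

/-- Decidable-equality instances are all equal. -/
private lemma decEq_irrel {α : Type*} (i1 i2 : DecidableEq α) : i1 = i2 := by
  funext a b; exact Subsingleton.elim _ _

/-- Multiset subtraction does not depend on the decidability instance. -/
private lemma msub_irrel {α : Type*} (i1 i2 : DecidableEq α) (s t : Multiset α) :
    @HSub.hSub _ _ _ (@instHSub _ (@Multiset.instSub α i1)) s t
      = @HSub.hSub _ _ _ (@instHSub _ (@Multiset.instSub α i2)) s t := by
  rw [decEq_irrel i1 i2]

/-- Multiset filtering does not depend on the decidability instance. -/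
private lemma mfilter_irrel {α : Type*} (p : α → Prop) (h1 h2 : DecidablePred p)
    (s : Multiset α) : @Multiset.filter α p h1 s = @Multiset.filter α p h2 s := by
  have : h1 = h2 := funext fun a => Subsingleton.elim _ _
  rw [this]

private lemma connects_lift {α β : Type*} {E₁ : Multiset (Sym2 α)} {Fv₁ : Set α}
    {E₂ : Multiset (Sym2 β)} {Fv₂ : Set β} (f : α → β)
    (h : ∀ a b, Adj E₁ Fv₁ a b → Connects E₂ Fv₂ (f a) (f b)) :
    ∀ {u v}, Connects E₁ Fv₁ u v → Connects E₂ Fv₂ (f u) (f v) := by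
  intro u v huv
  induction huv with
  | refl => exact Relation.ReflTransGen.refl
  | tail _ hstep ih => exact ih.trans (h _ _ hstep)

variable {V : Type*} {d : ℕ}

private lemma map_inl_ne_map_inr (e : Sym2 V) (x : Sym2 (Fin d)) :
    Sym2.map (Sum.inl : V → V ⊕ Fin d) e ≠ Sym2.map Sum.inr x := by
  induction e using Sym2.ind with | _ a b =>
  induction x using Sym2.ind with | _ i j =>
  simp [Sym2.map_pair_eq, Sym2.eq_iff]

private lemma map_inl_ne_attach (e : Sym2 V) (a : V) (i : Fin d) :
    Sym2.map (Sum.inl : V → V ⊕ Fin d) e ≠ s(Sum.inl a, Sum.inr i) := by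
  induction e using Sym2.ind with | _ x y =>
  simp [Sym2.map_pair_eq, Sym2.eq_iff]

private lemma attach_inj (w : Fin d → V) :
    Function.Injective (fun i => s(Sum.inl (w i), (Sum.inr i : V ⊕ Fin d))) := by
  intro i j h
  simp only [Sym2.eq_iff] at h
  rcases h with ⟨h1, h2⟩ | ⟨h1, h2⟩
  · exact Sum.inr_injective h2
  · exact absurd h1 (by simp)

private lemma count_cr_inl (fV : Fintype V) (dV : DecidableEq V)
    (E : Multiset (Sym2 V)) (s : V) (w : Fin d → V) (e : Sym2 V) :
    count (Sym2.map (Sum.inl : V → V ⊕ Fin d) e) (@cliqueReplace V fV dV E s d w)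
      = count e (E.filter (fun e => s ∉ e)) := by
  unfold cliqueReplace
  rw [count_add, count_add]
  have h1 : count (Sym2.map (Sum.inl : V → V ⊕ Fin d) e)
      (((Finset.univ : Finset (Sym2 (Fin d))).filter (fun e => ¬ e.IsDiag)).val.map
        (Sym2.map (Sum.inr : Fin d → V ⊕ Fin d))) = 0 := by
    rw [count_eq_zero]; intro hmem
    obtain ⟨x, _, heq⟩ := mem_map.1 hmem
    exact map_inl_ne_map_inr e x heq.symm
  have h2 : count (Sym2.map (Sum.inl : V → V ⊕ Fin d) e)
      ((Finset.univ : Finset (Fin d)).val.map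
        (fun i => s(Sum.inl (w i), (Sum.inr i : V ⊕ Fin d)))) = 0 := by
    rw [count_eq_zero]; intro hmem
    obtain ⟨i, _, heq⟩ := mem_map.1 hmem
    exact map_inl_ne_attach e (w i) i heq.symm
  rw [h1, h2, Multiset.count_map_eq_count' _ _ (Sym2.map.injective Sum.inl_injective)]
  omega

private lemma count_cr_attach (fV : Fintype V) (dV : DecidableEq V)
    (E : Multiset (Sym2 V)) (s : V) (w : Fin d → V) (a : V) (i : Fin d) :
    count s(Sum.inl a, (Sum.inr i : V ⊕ Fin d)) (@cliqueReplace V fV dV E s d w)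
      = if a = w i then 1 else 0 := by
  unfold cliqueReplace
  rw [count_add, count_add]
  have h1 : count s(Sum.inl a, (Sum.inr i : V ⊕ Fin d))
      ((Multiset.filter (fun e => s ∉ e) E).map (Sym2.map (Sum.inl : V → V ⊕ Fin d))) = 0 := by
    rw [count_eq_zero]; intro hmem
    obtain ⟨e', _, heq⟩ := mem_map.1 hmem
    exact map_inl_ne_attach e' a i heq
  have h2 : count s(Sum.inl a, (Sum.inr i : V ⊕ Fin d))
      (((Finset.univ : Finset (Sym2 (Fin d))).filter (fun e => ¬ e.IsDiag)).val.map
        (Sym2.map (Sum.inr : Fin d → V ⊕ Fin d))) = 0 := by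
    rw [count_eq_zero]; intro hmem
    obtain ⟨x, _, heq⟩ := mem_map.1 hmem
    induction x using Sym2.ind with | _ p q =>
    rw [Sym2.map_pair_eq, Sym2.eq_iff] at heq
    simp at heq
  rw [h1, h2]
  simp only [Nat.zero_add, Nat.add_zero]
  split
  · rename_i h; subst h
    rw [show s(Sum.inl (w i), (Sum.inr i : V ⊕ Fin d))
          = (fun j => s(Sum.inl (w j), (Sum.inr j : V ⊕ Fin d))) i from rfl,
      Multiset.count_map_eq_count' _ _ (attach_inj w), Multiset.count_univ]
  · rename_i h
    rw [count_eq_zero]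
    intro hmem
    obtain ⟨j, _, heq⟩ := mem_map.1 hmem
    rw [Sym2.eq_iff] at heq
    rcases heq with ⟨hh1, hh2⟩ | ⟨hh1, hh2⟩
    · cases Sum.inr_injective hh2
      exact h (Sum.inl_injective hh1.symm)
    · exact absurd hh1 (by simp)

private lemma count_cr_clique (fV : Fintype V) (dV : DecidableEq V)
    (E : Multiset (Sym2 V)) (s : V) (w : Fin d → V) (i j : Fin d) :
    count s(Sum.inr i, (Sum.inr j : V ⊕ Fin d)) (@cliqueReplace V fV dV E s d w)
      = if i = j then 0 else 1 := by
  unfold cliqueReplace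
  rw [count_add, count_add]
  have h1 : count s(Sum.inr i, (Sum.inr j : V ⊕ Fin d))
      ((Multiset.filter (fun e => s ∉ e) E).map (Sym2.map (Sum.inl : V → V ⊕ Fin d))) = 0 := by
    rw [count_eq_zero]; intro hmem
    obtain ⟨e', _, heq⟩ := mem_map.1 hmem
    induction e' using Sym2.ind with | _ p q =>
    rw [Sym2.map_pair_eq, Sym2.eq_iff] at heq
    simp at heq
  have h2 : count s(Sum.inr i, (Sum.inr j : V ⊕ Fin d))
      ((Finset.univ : Finset (Fin d)).val.map
        (fun k => s(Sum.inl (w k), (Sum.inr k : V ⊕ Fin d)))) = 0 := by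
    rw [count_eq_zero]; intro hmem
    obtain ⟨k, _, heq⟩ := mem_map.1 hmem
    rw [Sym2.eq_iff] at heq
    rcases heq with ⟨hh1, _⟩ | ⟨hh1, _⟩ <;> exact absurd hh1 (by simp)
  rw [h1, h2]
  simp only [Nat.zero_add, Nat.add_zero]
  rw [show s(Sum.inr i, (Sum.inr j : V ⊕ Fin d)) = Sym2.map Sum.inr s(i, j) by
      rw [Sym2.map_pair_eq],
    Multiset.count_map_eq_count' _ _ (Sym2.map.injective Sum.inr_injective)]
  by_cases hij : i = j
  · subst hij
    rw [if_pos rfl, count_eq_zero]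
    intro hmem
    exact (Finset.mem_filter.1 (Finset.mem_def.2 hmem)).2 (Sym2.mk_isDiag_iff.2 rfl)
  · rw [if_neg hij, count_eq_one_of_mem (Finset.nodup _)
      (Finset.mem_filter.2 ⟨Finset.mem_univ _, by simp [Sym2.mk_isDiag_iff, hij]⟩)]

private lemma mem_cr_shape {fV : Fintype V} {dV : DecidableEq V}
    {E : Multiset (Sym2 V)} {s : V} {w : Fin d → V} {e : Sym2 (V ⊕ Fin d)}
    (h : e ∈ @cliqueReplace V fV dV E s d w) :
    (∃ a b : V, s(a, b) ∈ E ∧ s ∉ s(a, b) ∧ e = s(Sum.inl a, Sum.inl b)) ∨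
    (∃ i j : Fin d, i ≠ j ∧ e = s(Sum.inr i, Sum.inr j)) ∨
    (∃ i : Fin d, e = s(Sum.inl (w i), Sum.inr i)) := by
  unfold cliqueReplace at h
  rcases mem_add.1 h with h | h
  · rcases mem_add.1 h with h | h
    · obtain ⟨e', he', heq⟩ := mem_map.1 h
      rw [mem_filter] at he'
      left
      induction e' using Sym2.ind with | _ a b =>
      exact ⟨a, b, he'.1, he'.2, by rw [← heq, Sym2.map_pair_eq]⟩
    · obtain ⟨x, hx, heq⟩ := mem_map.1 h
      right; left
      induction x using Sym2.ind with | _ i j =>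
      refine ⟨i, j, ?_, by rw [← heq, Sym2.map_pair_eq]⟩
      intro hij; subst hij
      exact (Finset.mem_filter.1 (Finset.mem_def.2 hx)).2 (Sym2.mk_isDiag_iff.2 rfl)
  · obtain ⟨i, _, heq⟩ := mem_map.1 h
    exact Or.inr (Or.inr ⟨i, heq.symm⟩)

variable {E : Multiset (Sym2 V)} {T : Set V} {s : V} {w : Fin d → V}

private lemma sedge_inj (hwinj : Function.Injective w) (hws : ∀ i, w i ≠ s) :
    Function.Injective (fun i : Fin d => s(s, w i)) := by
  intro i j h
  simp only [Sym2.eq_iff] at h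
  rcases h with ⟨_, h2⟩ | ⟨h1, _⟩
  · exact hwinj h2
  · exact absurd h1.symm (hws j)

private lemma count_sedge (dV : DecidableEq V) (hwinj : Function.Injective w) (hws : ∀ i, w i ≠ s)
    (hinc : E.filter (fun e => s ∈ e)
      = Multiset.map (fun i => s(s, w i)) (Finset.univ : Finset (Fin d)).val)
    (i : Fin d) : count s(s, w i) E = 1 := by
  have hmem : s ∈ s(s, w i) := Sym2.mem_iff.2 (Or.inl rfl)
  have h1 : count s(s, w i) (E.filter (fun e => s ∈ e)) = count s(s, w i) E := by
    rw [count_filter, if_pos hmem]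
  rw [← h1, hinc, show s(s, w i) = (fun j => s(s, w j)) i from rfl,
    Multiset.count_map_eq_count' _ _ (sedge_inj hwinj hws), Multiset.count_univ]

private lemma mem_sedge_form (dV : DecidableEq V)
    (hinc : E.filter (fun e => s ∈ e)
      = Multiset.map (fun i => s(s, w i)) (Finset.univ : Finset (Fin d)).val)
    {e : Sym2 V} (he : e ∈ E) (hse : s ∈ e) : ∃ i, e = s(s, w i) := by
  have hm : e ∈ E.filter (fun e => s ∈ e) := mem_filter.2 ⟨he, hse⟩
  rw [hinc] at hm
  obtain ⟨i, _, heq⟩ := mem_map.1 hm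
  exact ⟨i, heq.symm⟩

private lemma elemConn_set_nonempty (E : Multiset (Sym2 V)) (T : Set V) (u v : V)
    (huv : u ≠ v) :
    {n | ∃ (Fv : Finset V) (Fe : Multiset (Sym2 V)), (↑Fv : Set V) ⊆ Tᶜ ∧ Fe ≤ E ∧
      n = Fv.card + Multiset.card Fe ∧ ¬ Connects (E - Fe) (↑Fv) u v}.Nonempty := by
  refine ⟨Multiset.card E, ∅, E, by simp, le_refl _, by simp, ?_⟩
  intro hcon
  apply huv
  clear huv
  induction hcon with
  | refl => rfl
  | tail _ hstep ih =>
    rw [tsub_self] at hstep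
    exact absurd hstep.1 (Multiset.notMem_zero _)

private lemma dir1 (fV : Fintype V) (dV : DecidableEq V)
    (hs : s ∈ T) (hwinj : Function.Injective w) (hws : ∀ i, w i ≠ s)
    (hinc : E.filter (fun e => s ∈ e)
      = Multiset.map (fun i => s(s, w i)) (Finset.univ : Finset (Fin d)).val)
    (u v : V) (hus : u ≠ s) (hvs : v ≠ s) (huv : u ≠ v) :
    elemConn (@cliqueReplace V fV dV E s d w)
        ((Sum.inl : V → V ⊕ Fin d) '' (T \ {s})) (Sum.inl u) (Sum.inl v)
      ≤ elemConn E T u v := by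
  obtain ⟨Fv, Fe, hFvT, hFeE, hcard, hdisc⟩ :=
    Nat.sInf_mem (elemConn_set_nonempty E T u v huv)
  rw [msub_irrel _ (inferInstance : DecidableEq (Sym2 V))] at hdisc
  have hsFv : s ∉ (↑Fv : Set V) := fun hsf => hFvT hsf hs
  set Fv₁ : Finset (V ⊕ Fin d) :=
    Fv.image Sum.inl
      ∪ (Finset.univ.filter (fun i => s(s, w i) ∈ Fe)).image Sum.inr with hFv₁
  set Fe₁ : Multiset (Sym2 (V ⊕ Fin d)) :=
    (Fe.filter (fun e => s ∉ e)).map (Sym2.map Sum.inl) with hFe₁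
  -- count of s-incident deleted edges
  have hsplit : Fe.filter (fun e => s ∈ e)
      = ((Finset.univ : Finset (Fin d)).filter (fun i => s(s, w i) ∈ Fe)).val.map
          (fun i => s(s, w i)) := by
    refine Multiset.ext.2 fun e => ?_
    by_cases hform : ∃ i, e = s(s, w i)
    · obtain ⟨i, rfl⟩ := hform
      rw [count_filter, if_pos (Sym2.mem_iff.2 (Or.inl rfl)),
        show s(s, w i) = (fun j => s(s, w j)) i from rfl,
        Multiset.count_map_eq_count' _ _ (sedge_inj hwinj hws)]
      by_cases hmem : s(s, w i) ∈ Fe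
      · have h1 : Multiset.count s(s, w i) Fe ≤ 1 := by
          rw [← count_sedge dV hwinj hws hinc i]
          exact count_le_of_le _ hFeE
        have h2 : 0 < Multiset.count s(s, w i) Fe := count_pos.2 hmem
        have h3 : Multiset.count i
            ((Finset.univ : Finset (Fin d)).filter (fun j => s(s, w j) ∈ Fe)).val = 1 :=
          count_eq_one_of_mem (Finset.nodup _)
            (Finset.mem_def.1 (Finset.mem_filter.2 ⟨Finset.mem_univ _, hmem⟩))
        beta_reduce
        omega
      · have h3 : Multiset.count i
            ((Finset.univ : Finset (Fin d)).filter (fun j => s(s, w j) ∈ Fe)).val = 0 :=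
          count_eq_zero.2 (fun hc => hmem (Finset.mem_filter.1 (Finset.mem_def.2 hc)).2)
        rw [count_eq_zero.2 hmem, h3]
    · have hR : Multiset.count e
          (((Finset.univ : Finset (Fin d)).filter (fun i => s(s, w i) ∈ Fe)).val.map
            (fun i => s(s, w i))) = 0 := by
        rw [count_eq_zero]
        intro hmem
        obtain ⟨i, _, heq⟩ := mem_map.1 hmem
        exact hform ⟨i, heq.symm⟩
      rw [hR, count_filter]
      split
      · rename_i hse
        exact count_eq_zero.2
          (fun hmemFe => hform (mem_sedge_form dV hinc (mem_of_le hFeE hmemFe) hse))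
      · rfl
  refine le_trans (Nat.sInf_le ?_) (le_of_eq hcard.symm)
  refine ⟨Fv₁, Fe₁, ?_, ?_, ?_, ?_⟩
  · -- avoids terminals
    intro x hx hmem
    obtain ⟨t, ht, rfl⟩ := hmem
    simp only [hFv₁, Finset.coe_union, Set.mem_union, Finset.coe_image,
      Set.mem_image, Finset.mem_coe] at hx
    rcases hx with ⟨a, ha, heq⟩ | ⟨i, _, heq⟩
    · cases Sum.inl_injective heq
      exact hFvT ha ht.1
    · cases heq
  · -- Fe₁ ≤ cliqueReplace
    show Fe₁ ≤ @cliqueReplace V fV dV E s d w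
    unfold cliqueReplace
    rw [hFe₁]
    refine le_trans ?_ (le_trans (Multiset.le_add_right _ _) (Multiset.le_add_right _ _))
    exact map_le_map (filter_le_filter _ hFeE)
  · -- cardinality
    have hdisj : Disjoint (Fv.image (Sum.inl : V → V ⊕ Fin d))
        ((Finset.univ.filter (fun i => s(s, w i) ∈ Fe)).image Sum.inr) := by
      rw [Finset.disjoint_left]
      rintro x hx1 hx2
      obtain ⟨a, _, rfl⟩ := Finset.mem_image.1 hx1
      obtain ⟨i, _, heq⟩ := Finset.mem_image.1 hx2
      cases heq
    have hsplitFe : Fe.filter (fun e => s ∉ e) + Fe.filter (fun e => s ∈ e) = Fe := by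
      refine Multiset.ext.2 fun e => ?_
      rw [count_add, count_filter, count_filter]
      by_cases h : s ∈ e
      · rw [if_pos h, if_neg (fun hh => hh h)]
        omega
      · rw [if_neg h, if_pos h]
        omega
    have hcFe : Multiset.card Fe = Multiset.card (Fe.filter (fun e => s ∉ e))
        + (Finset.univ.filter (fun i => s(s, w i) ∈ Fe)).card := by
      have hc := congrArg Multiset.card hsplitFe
      rw [Multiset.card_add] at hc
      have hc2 := congrArg Multiset.card hsplit
      rw [Multiset.card_map] at hc2
      rw [← hc, hc2]
      rfl
    rw [hFv₁, Finset.card_union_of_disjoint hdisj,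
      Finset.card_image_of_injective _ Sum.inl_injective,
      Finset.card_image_of_injective _ Sum.inr_injective, hFe₁,
      Multiset.card_map, hcFe]
    omega
  · -- disconnection
    rw [msub_irrel _ (inferInstance : DecidableEq (Sym2 (V ⊕ Fin d)))]
    intro hcon
    apply hdisc
    have hstep : ∀ x y, Adj (@cliqueReplace V fV dV E s d w - Fe₁) (↑Fv₁) x y →
        Connects (E - Fe) (↑Fv) ((Sum.elim id (fun _ => s)) x)
          ((Sum.elim id (fun _ => s)) y) := by
      rintro x y ⟨hmemxy, hx, hy⟩
      have hmemCR : s(x, y) ∈ @cliqueReplace V fV dV E s d w :=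
        mem_of_le (Multiset.sub_le_self _ _) hmemxy
      have hnotFv : ∀ a : V, Sum.inl a ∉ (↑Fv₁ : Set (V ⊕ Fin d)) → a ∉ (↑Fv : Set V) := by
        intro a h ha
        apply h
        simp only [hFv₁, Finset.coe_union, Set.mem_union, Finset.coe_image,
          Set.mem_image, Finset.mem_coe]
        exact Or.inl ⟨a, ha, rfl⟩
      have hnotB : ∀ i : Fin d, Sum.inr i ∉ (↑Fv₁ : Set (V ⊕ Fin d)) → s(s, w i) ∉ Fe := by
        intro i h hi
        apply h
        simp only [hFv₁, Finset.coe_union, Set.mem_union, Finset.coe_image,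
          Set.mem_image, Finset.mem_coe]
        exact Or.inr ⟨i, Finset.mem_filter.2 ⟨Finset.mem_univ _, hi⟩, rfl⟩
      rcases mem_cr_shape hmemCR with ⟨a, b, haE, hsab, heq⟩ | ⟨i, j, hij, heq⟩ | ⟨i, heq⟩
      · -- ordinary edge
        have hab : s(a, b) ∈ E - Fe := by
          rw [← count_pos, count_sub]
          have h1 : 0 < count s(x, y) (@cliqueReplace V fV dV E s d w - Fe₁) :=
            count_pos.2 hmemxy
          rw [heq, count_sub] at h1
          have hCR : count s(Sum.inl a, (Sum.inl b : V ⊕ Fin d))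
              (@cliqueReplace V fV dV E s d w)
              = count s(a, b) (E.filter (fun e => s ∉ e)) := by
            rw [← Sym2.map_pair_eq]
            exact count_cr_inl fV dV E s w s(a, b)
          have hF : count s(Sum.inl a, (Sum.inl b : V ⊕ Fin d)) Fe₁
              = count s(a, b) (Fe.filter (fun e => s ∉ e)) := by
            rw [hFe₁, ← Sym2.map_pair_eq,
              Multiset.count_map_eq_count' _ _ (Sym2.map.injective Sum.inl_injective)]
          rw [hCR, hF, count_filter, count_filter, if_pos hsab, if_pos hsab] at h1
          omega
        rcases Sym2.eq_iff.1 heq with ⟨rfl, rfl⟩ | ⟨rfl, rfl⟩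
        · exact Relation.ReflTransGen.single ⟨hab, hnotFv a hx, hnotFv b hy⟩
        · refine Relation.ReflTransGen.single
            (show Adj (E - Fe) (↑Fv) b a from
              ⟨by rwa [Sym2.eq_swap] at hab, hnotFv b hx, hnotFv a hy⟩)
      · -- clique edge
        rcases Sym2.eq_iff.1 heq with ⟨rfl, rfl⟩ | ⟨rfl, rfl⟩ <;>
          exact Relation.ReflTransGen.refl
      · -- attach edge
        have hwiE : s(s, w i) ∈ E - Fe := by
          rw [← count_pos, count_sub, count_sedge dV hwinj hws hinc i]
          have hnot : s(s, w i) ∉ Fe := by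
            rcases Sym2.eq_iff.1 heq with ⟨hx1, hy1⟩ | ⟨hx1, hy1⟩
            · exact hnotB i (hy1 ▸ hy)
            · exact hnotB i (hx1 ▸ hx)
          rw [count_eq_zero.2 hnot]
          omega
        rcases Sym2.eq_iff.1 heq with ⟨rfl, rfl⟩ | ⟨rfl, rfl⟩
        · exact Relation.ReflTransGen.single
            (show Adj (E - Fe) (↑Fv) (w i) s from
              ⟨by rwa [Sym2.eq_swap] at hwiE, hnotFv _ hx, hsFv⟩)
        · exact Relation.ReflTransGen.single
            (show Adj (E - Fe) (↑Fv) s (w i) from ⟨hwiE, hsFv, hnotFv _ hy⟩)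
    have hfin := connects_lift _ hstep hcon
    simpa using hfin

private lemma dir2 (fV : Fintype V) (dV : DecidableEq V)
    (hloop : ∀ e ∈ E, ¬ e.IsDiag)
    (hwinj : Function.Injective w) (hws : ∀ i, w i ≠ s)
    (hinc : E.filter (fun e => s ∈ e)
      = Multiset.map (fun i => s(s, w i)) (Finset.univ : Finset (Fin d)).val)
    (u v : V) (hus : u ≠ s) (hvs : v ≠ s) (huv : u ≠ v) :
    elemConn E T u v
      ≤ elemConn (@cliqueReplace V fV dV E s d w)
          ((Sum.inl : V → V ⊕ Fin d) '' (T \ {s})) (Sum.inl u) (Sum.inl v) := by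
  obtain ⟨Fv₁, Fe₁, hFvT₁, hFeG₁, hcard₁, hdisc₁⟩ :=
    Nat.sInf_mem (elemConn_set_nonempty (@cliqueReplace V fV dV E s d w)
      ((Sum.inl : V → V ⊕ Fin d) '' (T \ {s})) (Sum.inl u) (Sum.inl v)
      (fun h => huv (Sum.inl_injective h)))
  rw [msub_irrel _ (inferInstance : DecidableEq (Sym2 (V ⊕ Fin d)))] at hdisc₁
  set P : Sym2 (V ⊕ Fin d) → Prop :=
    fun e => e ∈ (E.filter (fun e => s ∉ e)).map (Sym2.map (Sum.inl : V → V ⊕ Fin d))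
    with hP
  set Bad : Fin d → Prop := fun i => Sum.inr i ∈ Fv₁ ∨ s(Sum.inl (w i), Sum.inr i) ∈ Fe₁ ∨
    ∃ j, i < j ∧ s(Sum.inr i, Sum.inr j) ∈ Fe₁ with hBad
  have hBadI : ∀ i, Bad i ↔ (Sum.inr i ∈ Fv₁ ∨ s(Sum.inl (w i), Sum.inr i) ∈ Fe₁ ∨
      ∃ j, i < j ∧ s(Sum.inr i, Sum.inr j) ∈ Fe₁) := by
    intro i; rw [hBad]
  set Fv : Finset V := (@Finset.univ V fV).filter (fun x => Sum.inl x ∈ Fv₁ ∧ x ≠ s)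
    with hFv
  have hFvI : ∀ x : V, x ∈ Fv ↔ (Sum.inl x ∈ Fv₁ ∧ x ≠ s) := by
    intro x
    rw [hFv, Finset.mem_filter]
    exact ⟨fun h => h.2, fun h => ⟨Finset.mem_univ _, h⟩⟩
  set FeA : Multiset (Sym2 V) :=
    (Fe₁.filter P).map (Sym2.map (Sum.elim id (fun _ => s))) with hFeA
  set FeB : Multiset (Sym2 V) :=
    ((Finset.univ : Finset (Fin d)).filter Bad).val.map (fun i => s(s, w i)) with hFeB
  have hri : ∀ e' : Sym2 V,
      Sym2.map (Sum.elim id (fun _ => s)) (Sym2.map (Sum.inl : V → V ⊕ Fin d) e') = e' := by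
    intro e'
    rw [Sym2.map_map]
    have hco : (Sum.elim id (fun _ => s) : V ⊕ Fin d → V) ∘ Sum.inl = id := rfl
    rw [hco, Sym2.map_id]
    rfl
  have hMle : Fe₁.filter P
      ≤ (E.filter (fun e => s ∉ e)).map (Sym2.map (Sum.inl : V → V ⊕ Fin d)) := by
    rw [Multiset.le_iff_count]
    intro e
    rw [count_filter]
    split
    · rename_i hPe
      have hPe' : e ∈ (E.filter (fun e => s ∉ e)).map
          (Sym2.map (Sum.inl : V → V ⊕ Fin d)) := by
        rw [hP] at hPe; exact hPe
      obtain ⟨e', he', rfl⟩ := mem_map.1 hPe'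
      calc count (Sym2.map Sum.inl e') Fe₁
          ≤ count (Sym2.map Sum.inl e') (@cliqueReplace V fV dV E s d w) :=
            count_le_of_le _ hFeG₁
        _ = count e' (E.filter (fun e => s ∉ e)) := count_cr_inl fV dV E s w e'
        _ = count (Sym2.map Sum.inl e')
              ((E.filter (fun e => s ∉ e)).map (Sym2.map (Sum.inl : V → V ⊕ Fin d))) :=
            (Multiset.count_map_eq_count' _ _
              (Sym2.map.injective Sum.inl_injective) _).symm
    · exact Nat.zero_le _
  have hmapFeA : FeA.map (Sym2.map (Sum.inl : V → V ⊕ Fin d)) = Fe₁.filter P := by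
    rw [hFeA, Multiset.map_map]
    have hid : ∀ x ∈ Fe₁.filter P,
        (Sym2.map (Sum.inl : V → V ⊕ Fin d) ∘ Sym2.map (Sum.elim id (fun _ => s))) x
          = id x := by
      intro x hx
      have hPx : P x := of_mem_filter hx
      rw [hP] at hPx
      obtain ⟨e', _, rfl⟩ := mem_map.1 hPx
      simp only [Function.comp_apply, id_eq, hri e']
    rw [Multiset.map_congr rfl hid, Multiset.map_id]
  have hcntA : ∀ e' : Sym2 V,
      count e' FeA = count (Sym2.map (Sum.inl : V → V ⊕ Fin d) e') (Fe₁.filter P) := by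
    intro e'
    rw [← hmapFeA,
      Multiset.count_map_eq_count' _ _ (Sym2.map.injective Sum.inl_injective)]
  have hFeAle : FeA ≤ E.filter (fun e => s ∉ e) := by
    rw [Multiset.le_iff_count]
    intro e'
    rw [hcntA e']
    calc count (Sym2.map (Sum.inl : V → V ⊕ Fin d) e') (Fe₁.filter P)
        ≤ count (Sym2.map (Sum.inl : V → V ⊕ Fin d) e')
            ((E.filter (fun e => s ∉ e)).map (Sym2.map (Sum.inl : V → V ⊕ Fin d))) :=
          count_le_of_le _ hMle
      _ = count e' (E.filter (fun e => s ∉ e)) :=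
          Multiset.count_map_eq_count' _ _ (Sym2.map.injective Sum.inl_injective) _
  have hFeBle : FeB ≤ E.filter (fun e => s ∈ e) := by
    rw [hinc, hFeB]
    exact map_le_map (Finset.val_le_iff.2 (Finset.filter_subset _ _))
  have hsplitE : E.filter (fun e => s ∉ e) + E.filter (fun e => s ∈ e) = E := by
    refine Multiset.ext.2 fun e => ?_
    rw [count_add, count_filter, count_filter]
    by_cases h : s ∈ e
    · rw [if_pos h, if_neg (fun hh => hh h)]
      omega
    · rw [if_neg h, if_pos h]
      omega
  have hFele : FeA + FeB ≤ E := by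
    calc FeA + FeB ≤ E.filter (fun e => s ∉ e) + E.filter (fun e => s ∈ e) :=
          add_le_add hFeAle hFeBle
      _ = E := hsplitE
  have hFvTc : (↑Fv : Set V) ⊆ Tᶜ := by
    intro x hx hxT
    have hx' := (hFvI x).1 (Finset.mem_coe.1 hx)
    exact hFvT₁ (Finset.mem_coe.2 hx'.1) ⟨x, ⟨hxT, hx'.2⟩, rfl⟩
  have hcntB : ∀ i : Fin d, count s(s, w i) FeB = (if Bad i then 1 else 0) := by
    intro i
    rw [hFeB, show s(s, w i) = (fun j => s(s, w j)) i from rfl,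
      Multiset.count_map_eq_count' _ _ (sedge_inj hwinj hws)]
    by_cases hb : Bad i
    · rw [if_pos hb, count_eq_one_of_mem (Finset.nodup _)
        (Finset.mem_def.1 (Finset.mem_filter.2 ⟨Finset.mem_univ _, hb⟩))]
    · rw [if_neg hb,
        count_eq_zero.2 (fun hc => hb (Finset.mem_filter.1 (Finset.mem_def.2 hc)).2)]
  -- simulation facts
  have hFa : ∀ e' : Sym2 V, s ∉ e' → e' ∈ E - (FeA + FeB) →
      Sym2.map (Sum.inl : V → V ⊕ Fin d) e' ∈ @cliqueReplace V fV dV E s d w - Fe₁ := by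
    intro e' hse he'
    have hE : e' ∈ E := mem_of_le (Multiset.sub_le_self _ _) he'
    have hpos : 0 < count e' E - count e' (FeA + FeB) := by
      rw [← count_sub]; exact count_pos.2 he'
    have hP' : P (Sym2.map (Sum.inl : V → V ⊕ Fin d) e') := by
      rw [hP]
      exact mem_map.2 ⟨e', mem_filter.2 ⟨hE, hse⟩, rfl⟩
    have h2 : count (Sym2.map (Sum.inl : V → V ⊕ Fin d) e') Fe₁ = count e' FeA := by
      rw [hcntA e', count_filter, if_pos hP']
    have h1 : count (Sym2.map (Sum.inl : V → V ⊕ Fin d) e')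
        (@cliqueReplace V fV dV E s d w) = count e' E := by
      rw [count_cr_inl fV dV E s w e', count_filter, if_pos hse]
    rw [← count_pos, count_sub, h1, h2]
    have h3 : count e' FeA ≤ count e' (FeA + FeB) := by
      rw [count_add]; omega
    omega
  have hFb : ∀ i : Fin d, s(s, w i) ∈ E - (FeA + FeB) → ¬ Bad i := by
    intro i hmem hbad
    have hpos : 0 < count s(s, w i) E - count s(s, w i) (FeA + FeB) := by
      rw [← count_sub]; exact count_pos.2 hmem
    rw [count_sedge dV hwinj hws hinc i, count_add, hcntB i, if_pos hbad] at hpos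
    omega
  have hFattach : ∀ i : Fin d, ¬ Bad i →
      s(Sum.inl (w i), (Sum.inr i : V ⊕ Fin d)) ∈ @cliqueReplace V fV dV E s d w - Fe₁ := by
    intro i hb
    rw [← count_pos, count_sub, count_cr_attach fV dV E s w (w i) i, if_pos rfl,
      count_eq_zero.2 (fun hmem => hb ((hBadI i).2 (Or.inr (Or.inl hmem))))]
    omega
  have hFclique : ∀ i j : Fin d, i ≠ j → ¬ Bad i → ¬ Bad j →
      s(Sum.inr i, (Sum.inr j : V ⊕ Fin d)) ∈ @cliqueReplace V fV dV E s d w - Fe₁ := by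
    intro i j hij hbi hbj
    have hn : s(Sum.inr i, (Sum.inr j : V ⊕ Fin d)) ∉ Fe₁ := by
      intro hmem
      rcases lt_trichotomy i j with h | h | h
      · exact hbi ((hBadI i).2 (Or.inr (Or.inr ⟨j, h, hmem⟩)))
      · exact hij h
      · exact hbj ((hBadI j).2 (Or.inr (Or.inr ⟨i, h, by rwa [Sym2.eq_swap] at hmem⟩)))
    rw [← count_pos, count_sub, count_cr_clique fV dV E s w i j, if_neg hij,
      count_eq_zero.2 hn]
    omega
  have hFinr : ∀ i : Fin d, ¬ Bad i → (Sum.inr i : V ⊕ Fin d) ∉ (↑Fv₁ : Set (V ⊕ Fin d)) :=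
    fun i hb hm => hb ((hBadI i).2 (Or.inl (Finset.mem_coe.1 hm)))
  have hFinl : ∀ a : V, a ≠ s → a ∉ (↑Fv : Set V) →
      (Sum.inl a : V ⊕ Fin d) ∉ (↑Fv₁ : Set (V ⊕ Fin d)) := by
    intro a has haFv hmem
    exact haFv (Finset.mem_coe.2 ((hFvI a).2 ⟨Finset.mem_coe.1 hmem, has⟩))
  -- cardinality bounds
  have hcardA : Multiset.card FeA = Multiset.card (Fe₁.filter P) := by
    rw [hFeA, Multiset.card_map]
  have hcardB : Multiset.card FeB = ((Finset.univ : Finset (Fin d)).filter Bad).card := by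
    rw [hFeB, Multiset.card_map]
    rfl
  have hcardFe₁ : Multiset.card Fe₁ = Multiset.card (Fe₁.filter P)
      + Multiset.card (Fe₁.filter (fun e => ¬ P e)) := by
    have hsp : Fe₁.filter P + Fe₁.filter (fun e => ¬ P e) = Fe₁ := by
      refine Multiset.ext.2 fun e => ?_
      rw [count_add, count_filter, count_filter]
      by_cases h : P e
      · rw [if_pos h, if_neg (fun hh => hh h)]
        omega
      · rw [if_neg h, if_pos h]
        omega
    have hc := congrArg Multiset.card hsp
    rw [Multiset.card_add] at hc
    omega
  have hVb : Fv.card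
      + ((Finset.univ : Finset (Fin d)).filter (fun i => Sum.inr i ∈ Fv₁)).card
      ≤ Fv₁.card := by
    have hdisj : Disjoint (Fv.image (Sum.inl : V → V ⊕ Fin d))
        (((Finset.univ : Finset (Fin d)).filter (fun i => Sum.inr i ∈ Fv₁)).image Sum.inr) := by
      rw [Finset.disjoint_left]
      rintro x hx1 hx2
      obtain ⟨a, _, rfl⟩ := Finset.mem_image.1 hx1
      obtain ⟨i, _, heq⟩ := Finset.mem_image.1 hx2
      cases heq
    have hsub : Fv.image (Sum.inl : V → V ⊕ Fin d)
        ∪ ((Finset.univ : Finset (Fin d)).filter (fun i => Sum.inr i ∈ Fv₁)).image Sum.inr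
        ⊆ Fv₁ := by
      intro x hx
      rcases Finset.mem_union.1 hx with h | h
      · obtain ⟨a, ha, rfl⟩ := Finset.mem_image.1 h
        exact ((hFvI a).1 ha).1
      · obtain ⟨i, hi, rfl⟩ := Finset.mem_image.1 h
        exact (Finset.mem_filter.1 hi).2
    calc Fv.card + ((Finset.univ : Finset (Fin d)).filter (fun i => Sum.inr i ∈ Fv₁)).card
        = (Fv.image (Sum.inl : V → V ⊕ Fin d)
            ∪ ((Finset.univ : Finset (Fin d)).filter
                (fun i => Sum.inr i ∈ Fv₁)).image Sum.inr).card := by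
          rw [Finset.card_union_of_disjoint hdisj,
            Finset.card_image_of_injective _ Sum.inl_injective,
            Finset.card_image_of_injective _ Sum.inr_injective]
      _ ≤ Fv₁.card := Finset.card_le_card hsub
  have hBadb : ((Finset.univ : Finset (Fin d)).filter Bad).card
      ≤ ((Finset.univ : Finset (Fin d)).filter (fun i => Sum.inr i ∈ Fv₁)).card
        + Multiset.card (Fe₁.filter (fun e => ¬ P e)) := by
    have hsubset : (Finset.univ : Finset (Fin d)).filter Bad
        ⊆ ((Finset.univ : Finset (Fin d)).filter (fun i => Sum.inr i ∈ Fv₁))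
          ∪ ((Finset.univ : Finset (Fin d)).filter
              (fun i => Bad i ∧ Sum.inr i ∉ Fv₁)) := by
      intro i hi
      have hb : Bad i := (Finset.mem_filter.1 hi).2
      by_cases hv : Sum.inr i ∈ Fv₁
      · exact Finset.mem_union_left _ (Finset.mem_filter.2 ⟨Finset.mem_univ _, hv⟩)
      · exact Finset.mem_union_right _ (Finset.mem_filter.2 ⟨Finset.mem_univ _, hb, hv⟩)
    have h2 : (((Finset.univ : Finset (Fin d)).filter
        (fun i => Bad i ∧ Sum.inr i ∉ Fv₁))).card
        ≤ Multiset.card (Fe₁.filter (fun e => ¬ P e)) := by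
      set g : Fin d → Sym2 (V ⊕ Fin d) := fun i =>
        if s(Sum.inl (w i), Sum.inr i) ∈ Fe₁ then s(Sum.inl (w i), Sum.inr i)
        else if h : ∃ j, i < j ∧ s(Sum.inr i, Sum.inr j) ∈ Fe₁ then
          s(Sum.inr i, Sum.inr h.choose)
        else s(Sum.inr i, Sum.inr i) with hg
      have hgspec : ∀ i : Fin d, Bad i → Sum.inr i ∉ Fv₁ →
          (g i ∈ Fe₁ ∧ ¬ P (g i) ∧
            ((g i = s(Sum.inl (w i), Sum.inr i)) ∨
              (∃ j, i < j ∧ g i = s(Sum.inr i, Sum.inr j)))) := by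
        intro i hb hv
        rcases (hBadI i).1 hb with hv' | hat | hcl
        · exact absurd hv' hv
        · refine ⟨?_, ?_, Or.inl ?_⟩ <;> rw [hg] <;> simp only [if_pos hat]
          · exact hat
          · intro hPe
            rw [hP] at hPe
            obtain ⟨e', _, heq⟩ := mem_map.1 hPe
            exact map_inl_ne_attach e' (w i) i heq
        · by_cases hat : s(Sum.inl (w i), Sum.inr i) ∈ Fe₁
          · refine ⟨?_, ?_, Or.inl ?_⟩ <;> rw [hg] <;> simp only [if_pos hat]
            · exact hat
            · intro hPe
              rw [hP] at hPe
              obtain ⟨e', _, heq⟩ := mem_map.1 hPe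
              exact map_inl_ne_attach e' (w i) i heq
          · have hgi : g i = s(Sum.inr i, Sum.inr hcl.choose) := by
              rw [hg]
              simp only [if_neg hat, dif_pos hcl]
            refine ⟨?_, ?_, Or.inr ⟨hcl.choose, hcl.choose_spec.1, hgi⟩⟩
            · rw [hgi]
              exact hcl.choose_spec.2
            · rw [hgi]
              intro hPe
              rw [hP] at hPe
              obtain ⟨e', _, heq⟩ := mem_map.1 hPe
              rw [show s(Sum.inr i, (Sum.inr hcl.choose : V ⊕ Fin d))
                  = Sym2.map Sum.inr s(i, hcl.choose) by rw [Sym2.map_pair_eq]] at heq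
              exact map_inl_ne_map_inr e' s(i, hcl.choose) heq
      refine le_trans (Finset.card_le_card_of_injOn g ?_ ?_)
        (Multiset.toFinset_card_le _)
      · intro i hi
        obtain ⟨-, hb, hv⟩ := Finset.mem_filter.1 hi
        obtain ⟨h1, h2, -⟩ := hgspec i hb hv
        rw [Finset.mem_coe, Multiset.mem_toFinset, mem_filter]
        exact ⟨h1, h2⟩
      · intro i hi i' hi' heq
        simp only [Finset.coe_filter, Set.mem_setOf_eq] at hi hi'
        obtain ⟨-, -, hshape⟩ := hgspec i hi.2.1 hi.2.2
        obtain ⟨-, -, hshape'⟩ := hgspec i' hi'.2.1 hi'.2.2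
        rcases hshape with hA | ⟨j, hij, hC⟩ <;> rcases hshape' with hA' | ⟨j', hij', hC'⟩
        · rw [hA, hA'] at heq
          rcases Sym2.eq_iff.1 heq with ⟨_, h2⟩ | ⟨h1, _⟩
          · exact Sum.inr_injective h2
          · exact absurd h1 (by simp)
        · rw [hA, hC'] at heq
          rcases Sym2.eq_iff.1 heq with ⟨h1, _⟩ | ⟨h1, _⟩ <;> exact absurd h1 (by simp)
        · rw [hC, hA'] at heq
          rcases Sym2.eq_iff.1 heq with ⟨h1, _⟩ | ⟨_, h2⟩ <;>
            first
              | exact absurd h1 (by simp)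
              | exact absurd h2 (by simp)
        · rw [hC, hC'] at heq
          rcases Sym2.eq_iff.1 heq with ⟨h1, h2⟩ | ⟨h1, h2⟩
          · exact Sum.inr_injective h1
          · have hii' : i = j' := Sum.inr_injective h1
            have hji : j = i' := Sum.inr_injective h2
            subst hii'
            subst hji
            exact absurd (lt_trans hij hij') (lt_irrefl _)
    calc ((Finset.univ : Finset (Fin d)).filter Bad).card
        ≤ (((Finset.univ : Finset (Fin d)).filter (fun i => Sum.inr i ∈ Fv₁))
            ∪ ((Finset.univ : Finset (Fin d)).filter
                (fun i => Bad i ∧ Sum.inr i ∉ Fv₁))).card := Finset.card_le_card hsubset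
      _ ≤ ((Finset.univ : Finset (Fin d)).filter (fun i => Sum.inr i ∈ Fv₁)).card
            + (((Finset.univ : Finset (Fin d)).filter
                (fun i => Bad i ∧ Sum.inr i ∉ Fv₁))).card := Finset.card_union_le _ _
      _ ≤ _ := by omega
  -- the cut works
  have hmem1 : elemConn E T u v ≤ Fv.card + Multiset.card (FeA + FeB) := by
    refine Nat.sInf_le ⟨Fv, FeA + FeB, hFvTc, hFele, rfl, ?_⟩
    rw [msub_irrel _ (inferInstance : DecidableEq (Sym2 V))]
    intro hcon
    refine hdisc₁ ?_
    suffices h : ∀ b, Connects (E - (FeA + FeB)) (↑Fv) u b →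
        (b ≠ s → Connects (@cliqueReplace V fV dV E s d w - Fe₁) (↑Fv₁)
          (Sum.inl u) (Sum.inl b)) ∧
        (b = s → ∃ i, ¬ Bad i ∧ Connects (@cliqueReplace V fV dV E s d w - Fe₁) (↑Fv₁)
          (Sum.inl u) (Sum.inr i)) by
      exact (h v hcon).1 hvs
    intro b hb
    induction hb with
    | refl => exact ⟨fun _ => Relation.ReflTransGen.refl, fun hu => absurd hu hus⟩
    | @tail p q hpath hstep ih =>
      obtain ⟨hmemE, hpFv, hqFv⟩ := hstep
      have hEpq : s(p, q) ∈ E := mem_of_le (Multiset.sub_le_self _ _) hmemE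
      by_cases hqs : q = s
      · by_cases hps : p = s
        · exact absurd (Sym2.mk_isDiag_iff.2 (hps.trans hqs.symm)) (hloop _ hEpq)
        · obtain ⟨j, hj⟩ :=
            mem_sedge_form dV hinc hEpq (Sym2.mem_iff.2 (Or.inr hqs.symm))
          have hp : p = w j := by
            rcases Sym2.eq_iff.1 hj with ⟨h1, _⟩ | ⟨h1, _⟩
            · exact absurd h1 hps
            · exact h1
          have hnb : ¬ Bad j := hFb j (by rwa [hj] at hmemE)
          refine ⟨fun hss => absurd hqs hss, fun _ => ⟨j, hnb, ?_⟩⟩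
          have hconn := ih.1 hps
          subst hp
          exact hconn.tail ⟨hFattach j hnb, hFinl (w j) (hws j) hpFv, hFinr j hnb⟩
      · by_cases hps : p = s
        · obtain ⟨j, hj⟩ :=
            mem_sedge_form dV hinc hEpq (Sym2.mem_iff.2 (Or.inl hps.symm))
          have hq : q = w j := by
            rcases Sym2.eq_iff.1 hj with ⟨_, h2⟩ | ⟨_, h2⟩
            · exact h2
            · exact absurd h2 hqs
          have hnb : ¬ Bad j := hFb j (by rwa [hj] at hmemE)
          obtain ⟨i, hnbi, hconn⟩ := ih.2 hps
          refine ⟨fun _ => ?_, fun hq' => absurd hq' hqs⟩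
          have hconn2 : Connects (@cliqueReplace V fV dV E s d w - Fe₁) (↑Fv₁)
              (Sum.inl u) (Sum.inr j) := by
            by_cases hij : i = j
            · subst hij; exact hconn
            · exact hconn.tail ⟨hFclique i j hij hnbi hnb, hFinr i hnbi, hFinr j hnb⟩
          subst hq
          refine hconn2.tail ⟨?_, hFinr j hnb, hFinl (w j) (hws j) hqFv⟩
          rw [Sym2.eq_swap]
          exact hFattach j hnb
        · have hse : s ∉ s(p, q) := by
            intro hmem
            rcases Sym2.mem_iff.1 hmem with h | h
            · exact hps h.symm
            · exact hqs h.symm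
          refine ⟨fun _ => ?_, fun hq' => absurd hq' hqs⟩
          refine (ih.1 hps).tail ⟨?_, hFinl p hps hpFv, hFinl q hqs hqFv⟩
          have hm := hFa s(p, q) hse hmemE
          rwa [Sym2.map_pair_eq] at hm
  have hsize : Fv.card + Multiset.card (FeA + FeB) ≤ Fv₁.card + Multiset.card Fe₁ := by
    rw [Multiset.card_add]
    omega
  exact le_trans hmem1 (le_trans hsize (le_of_eq hcard₁.symm))

end ElemHelpers

/-- **Replacing a terminal by a clique of non-terminals.**  If the terminal `s` has
degree `d` and its `d` incident edges join it to `d` distinct non-terminal vertices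
`w 0, …, w (d-1)`, then replacing `s` by a clique of `d` new non-terminal vertices,
with `sᵢ` attached to `w i`, preserves the element-connectivity between every pair of
distinct terminals other than `s`. -/
theorem replace_terminal_by_clique {V : Type*} [Fintype V] [DecidableEq V]
    (E : Multiset (Sym2 V)) (T : Set V) (hloop : ∀ e ∈ E, ¬ e.IsDiag)
    (s : V) (hs : s ∈ T) (d : ℕ) (w : Fin d → V)
    (hwinj : Function.Injective w) (hw : ∀ i, w i ∉ T)
    (hinc : E.filter (fun e => s ∈ e)
      = Multiset.map (fun i => s(s, w i)) (Finset.univ : Finset (Fin d)).val) :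
    ∀ u v : V, u ∈ T → v ∈ T → u ≠ s → v ≠ s → u ≠ v →
      elemConn (cliqueReplace E s d w)
          ((Sum.inl : V → V ⊕ Fin d) '' (T \ {s})) (Sum.inl u) (Sum.inl v)
        = elemConn E T u v := by
  intro u v hu hv hus hvs huv
  have hws : ∀ i, w i ≠ s := fun i h => hw i (h ▸ hs)
  exact le_antisymm (dir1 _ _ hs hwinj hws hinc u v hus hvs huv)
    (dir2 _ _ hloop hwinj hws hinc u v hus hvs huv)

end
end

section
/- Let G = (V, E) be an undirected multigraph with terminal set T ⊆ V. Let p and q be two adjacent non-terminal vertices that have a common neighbour w ∈ T (i.e., both edges {p,w} and {q,w} are present in G). Then deleting one edge pq preserves element-connectivity between all terminal pairs: κ'_{(G−pq, T)}(u,v) = κ'_{(G,T)}(u,v) for all distinct u, v ∈ T. -/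
/-!
If two adjacent non-terminals `p, q` have a common terminal neighbour `w`, then
deleting one copy of the edge `pq` preserves all pairwise element-connectivities
between terminals.

A multigraph on `V` is a finite multiset `E : Multiset (Sym2 V)` of unordered
pairs of distinct vertices.
-/

attribute [local instance] Classical.propDecidable

noncomputable section

section Aux

variable {V : Type*}

/-- `elemConn` with the subtraction taken with respect to the ambient
decidable-equality instance. -/
lemma elemConn_eq [inst : DecidableEq V] (E : Multiset (Sym2 V)) (T : Set V) (u v : V) :
    elemConn E T u v = sInf {n | ∃ (Fv : Finset V) (Fe : Multiset (Sym2 V)),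
      (↑Fv : Set V) ⊆ Tᶜ ∧ Fe ≤ E ∧
      n = Fv.card + Multiset.card Fe ∧ ¬ Connects (E - Fe) (↑Fv) u v} := by
  have hIV : (fun (a b : V) => Classical.propDecidable (a = b)) = inst :=
    funext fun a => funext fun b => Subsingleton.elim _ _
  unfold elemConn
  subst hIV
  rfl

lemma adj_symm' {E : Multiset (Sym2 V)} {Fv : Set V} {a b : V} (h : Adj E Fv a b) :
    Adj E Fv b a := ⟨by rw [Sym2.eq_swap]; exact h.1, h.2.2, h.2.1⟩

lemma connects_symm {E : Multiset (Sym2 V)} {Fv : Set V} {u v : V}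
    (h : Connects E Fv u v) : Connects E Fv v u :=
  (@Relation.ReflTransGen.stdSymm _ _ ⟨fun _ _ hh => adj_symm' hh⟩).symm _ _ h

lemma connects_mono {E E' : Multiset (Sym2 V)} {Fv : Set V} {u v : V}
    (hsub : ∀ e, e ∈ E → e ∈ E') (h : Connects E Fv u v) : Connects E' Fv u v :=
  Relation.ReflTransGen.mono (fun _ _ hab => ⟨hsub _ hab.1, hab.2.1, hab.2.2⟩) _ _ h

lemma connects_zero {Fv : Set V} {u v : V}
    (h : Connects (0 : Multiset (Sym2 V)) Fv u v) : u = v := by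
  induction h with
  | refl => rfl
  | tail _ hbc _ => exact absurd hbc.1 (Multiset.notMem_zero _)

lemma cut_nonempty [DecidableEq V] (E : Multiset (Sym2 V)) (T : Set V) {u v : V} (huv : u ≠ v) :
    {n | ∃ (Fv : Finset V) (Fe : Multiset (Sym2 V)), (↑Fv : Set V) ⊆ Tᶜ ∧ Fe ≤ E ∧
      n = Fv.card + Multiset.card Fe ∧ ¬ Connects (E - Fe) (↑Fv) u v}.Nonempty := by
  refine ⟨Multiset.card E, ∅, E, by simp, le_refl E, by simp, fun h => huv ?_⟩
  rw [tsub_self] at h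
  exact connects_zero h

lemma connects_cons {E : Multiset (Sym2 V)} {Fv : Set V} {p q u v : V}
    (h : Connects (s(p, q) ::ₘ E) Fv u v) :
    Connects E Fv u v ∨ (p ∉ Fv ∧ q ∉ Fv ∧
      ((Connects E Fv u p ∧ Connects E Fv q v) ∨
       (Connects E Fv u q ∧ Connects E Fv p v))) := by
  induction h using Relation.ReflTransGen.head_induction_on with
  | refl => exact Or.inl Relation.ReflTransGen.refl
  | head hac hcv ih =>
    obtain ⟨hmem, haF, hcF⟩ := hac
    rcases Multiset.mem_cons.mp hmem with heq | hE
    · rcases Sym2.eq_iff.mp heq with ⟨rfl, rfl⟩ | ⟨rfl, rfl⟩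
      · -- step p → q
        rcases ih with h1 | ⟨_, _, ⟨h1, h2⟩ | ⟨h1, h2⟩⟩
        · exact Or.inr ⟨haF, hcF, Or.inl ⟨Relation.ReflTransGen.refl, h1⟩⟩
        · exact Or.inl ((connects_symm h1).trans h2)
        · exact Or.inl h2
      · -- step q → p
        rcases ih with h1 | ⟨_, _, ⟨h1, h2⟩ | ⟨h1, h2⟩⟩
        · exact Or.inr ⟨hcF, haF, Or.inr ⟨Relation.ReflTransGen.refl, h1⟩⟩
        · exact Or.inl h2
        · exact Or.inl ((connects_symm h1).trans h2)
    · have hadj : Adj E Fv _ _ := ⟨hE, haF, hcF⟩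
      rcases ih with h1 | ⟨hpF, hqF, ⟨h1, h2⟩ | ⟨h1, h2⟩⟩
      · exact Or.inl (Relation.ReflTransGen.head hadj h1)
      · exact Or.inr ⟨hpF, hqF, Or.inl ⟨Relation.ReflTransGen.head hadj h1, h2⟩⟩
      · exact Or.inr ⟨hpF, hqF, Or.inr ⟨Relation.ReflTransGen.head hadj h1, h2⟩⟩

/-- Swapping one edge incident to `x` out of the cut for the vertex `x` itself:
if the old cut `(Fv, Fe)` disconnects `u, v` in `E.erase s(p,q)`, then
`(insert x Fv, Fe.erase g)` disconnects `u, v` in `E`, whenever `x` is an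
endpoint of both `s(p,q)` and `g`. -/
lemma swap_step [DecidableEq V] {E Fe : Multiset (Sym2 V)} {Fv : Finset V}
    {p q x : V} (hx : x ∈ s(p, q)) {g : Sym2 V} (hgx : x ∈ g)
    {u v : V}
    (hcut : ¬ Connects (E.erase s(p, q) - Fe) (↑Fv) u v) :
    ¬ Connects (E - Fe.erase g) (↑(insert x Fv : Finset V)) u v := by
  intro h
  apply hcut
  refine Relation.ReflTransGen.mono ?_ _ _ h
  rintro a b ⟨hmem, haF, hbF⟩
  rw [Finset.coe_insert, Set.mem_insert_iff] at haF hbF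
  push_neg at haF hbF
  obtain ⟨hax, haFv⟩ := haF
  obtain ⟨hbx, hbFv⟩ := hbF
  have hxab : x ∉ s(a, b) := by
    rw [Sym2.mem_iff]
    push_neg
    exact ⟨fun hh => hax hh.symm, fun hh => hbx hh.symm⟩
  have h1 : s(a, b) ≠ s(p, q) := fun hh => hxab (hh ▸ hx)
  have h2 : s(a, b) ≠ g := fun hh => hxab (hh ▸ hgx)
  have hcount : (E.erase s(p, q) - Fe).count s(a, b) = (E - Fe.erase g).count s(a, b) := by
    rw [Multiset.count_sub, Multiset.count_sub, Multiset.count_erase_of_ne h1,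
      Multiset.count_erase_of_ne h2]
  exact ⟨by rw [← Multiset.count_pos, hcount, Multiset.count_pos]; exact hmem, haFv, hbFv⟩

end Aux

/-- **Deleting an edge between non-terminals with a common terminal neighbour.**
If the non-terminals `p` and `q` are adjacent and have a common neighbour `w ∈ T`,
then deleting one edge `pq` preserves the element-connectivity between every pair
of distinct terminals. -/
theorem delete_edge_with_common_terminal_neighbor {V : Type*} [Fintype V] [DecidableEq V]
    (E : Multiset (Sym2 V)) (T : Set V) (hloop : ∀ e ∈ E, ¬ e.IsDiag)
    (p q w : V) (hp : p ∉ T) (hq : q ∉ T) (hw : w ∈ T) (hpq : p ≠ q)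
    (he : s(p, q) ∈ E) (hpw : s(p, w) ∈ E) (hqw : s(q, w) ∈ E) :
    ∀ u ∈ T, ∀ v ∈ T, u ≠ v →
      elemConn (E.erase s(p, q)) T u v = elemConn E T u v := by
  intro u hu v hv huv
  have hE'le : E.erase s(p, q) ≤ E := Multiset.erase_le _ _
  have hwp : w ≠ p := fun hh => hp (hh ▸ hw)
  have hwq : w ≠ q := fun hh => hq (hh ▸ hw)
  have hpwne : s(p, w) ≠ s(p, q) := by
    intro hh
    rcases Sym2.eq_iff.mp hh with ⟨-, h2⟩ | ⟨h1, -⟩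
    · exact hwq h2
    · exact hpq h1
  have hqwne : s(q, w) ≠ s(p, q) := by
    intro hh
    rcases Sym2.eq_iff.mp hh with ⟨h1, -⟩ | ⟨-, h2⟩
    · exact hpq h1.symm
    · exact hwp h2
  have hpwE' : s(p, w) ∈ E.erase s(p, q) := (Multiset.mem_erase_of_ne hpwne).mpr hpw
  have hqwE' : s(q, w) ∈ E.erase s(p, q) := (Multiset.mem_erase_of_ne hqwne).mpr hqw
  rw [elemConn_eq, elemConn_eq]
  apply le_antisymm
  · -- κ'(E') ≤ κ'(E)
    obtain ⟨Fv, Fe, hFvT, hFeE, hn, hcut⟩ := Nat.sInf_mem (cut_nonempty E T huv)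
    rw [hn]
    by_cases hmem : s(p, q) ∈ Fe
    · -- remove the edge pq from the cut as well
      have hcard : 0 < Multiset.card Fe :=
        Multiset.card_pos.mpr (fun hh => by simp [hh] at hmem)
      have hle1 : Fe.count s(p, q) ≤ E.count s(p, q) := Multiset.le_iff_count.mp hFeE _
      have hle2 : 1 ≤ Fe.count s(p, q) := Multiset.one_le_count_iff_mem.mpr hmem
      have hFE : E.erase s(p, q) - Fe.erase s(p, q) = E - Fe := by
        ext e
        rcases eq_or_ne e s(p, q) with rfl | hne
        · simp only [Multiset.count_sub, Multiset.count_erase_self]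
          omega
        · simp only [Multiset.count_sub, Multiset.count_erase_of_ne hne]
      refine le_trans (Nat.sInf_le ⟨Fv, Fe.erase s(p, q), hFvT,
        Multiset.erase_le_erase _ hFeE, rfl, by rw [hFE]; exact hcut⟩) ?_
      rw [Multiset.card_erase_of_mem hmem]
      have := Nat.succ_pred_eq_of_pos hcard
      omega
    · -- pq not in the cut: same cut works
      have hFeE' : Fe ≤ E.erase s(p, q) := by
        rw [Multiset.le_iff_count]
        intro e
        rcases eq_or_ne e s(p, q) with rfl | hne
        · simp [Multiset.count_eq_zero_of_notMem hmem]
        · rw [Multiset.count_erase_of_ne hne]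
          exact Multiset.le_iff_count.mp hFeE _
      refine Nat.sInf_le ⟨Fv, Fe, hFvT, hFeE', rfl, fun hcon => hcut ?_⟩
      exact connects_mono
        (fun e hh => Multiset.mem_of_le (tsub_le_tsub_right hE'le _) hh) hcon
  · -- κ'(E) ≤ κ'(E')
    obtain ⟨Fv, Fe, hFvT, hFeE', hn, hcut⟩ :=
      Nat.sInf_mem (cut_nonempty (E.erase s(p, q)) T huv)
    rw [hn]
    have hFeE : Fe ≤ E := le_trans hFeE' hE'le
    by_cases hcon : Connects (E - Fe) (↑Fv) u v
    · -- hard case: the cut fails in E, so the pq edge is essential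
      have hle1 : Fe.count s(p, q) ≤ (E.erase s(p, q)).count s(p, q) :=
        Multiset.le_iff_count.mp hFeE' _
      have hle2 : 1 ≤ E.count s(p, q) := Multiset.one_le_count_iff_mem.mpr he
      rw [Multiset.count_erase_self] at hle1
      have hkey : E - Fe = s(p, q) ::ₘ (E.erase s(p, q) - Fe) := by
        ext e
        rcases eq_or_ne e s(p, q) with rfl | hne
        · simp only [Multiset.count_sub, Multiset.count_cons_self,
            Multiset.count_erase_self]
          omega
        · simp only [Multiset.count_sub, Multiset.count_cons_of_ne hne,
            Multiset.count_erase_of_ne hne]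
      rw [hkey] at hcon
      rcases connects_cons hcon with hbad | ⟨hpF, hqF, hsplit⟩
      · exact absurd hbad hcut
      have hwF : w ∉ (↑Fv : Set V) := fun hh => (hFvT hh) hw
      -- at least one of the edges pw, qw is completely cut
      have habsent : s(p, w) ∉ E.erase s(p, q) - Fe ∨ s(q, w) ∉ E.erase s(p, q) - Fe := by
        by_contra hboth
        push_neg at hboth
        apply hcut
        have hadjpw : Adj (E.erase s(p, q) - Fe) (↑Fv) p w := ⟨hboth.1, hpF, hwF⟩
        have hadjqw : Adj (E.erase s(p, q) - Fe) (↑Fv) q w := ⟨hboth.2, hqF, hwF⟩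
        rcases hsplit with ⟨h1, h2⟩ | ⟨h1, h2⟩
        · exact Relation.ReflTransGen.trans
            (Relation.ReflTransGen.tail (Relation.ReflTransGen.tail h1 hadjpw)
              (adj_symm' hadjqw)) h2
        · exact Relation.ReflTransGen.trans
            (Relation.ReflTransGen.tail (Relation.ReflTransGen.tail h1 hadjqw)
              (adj_symm' hadjpw)) h2
      -- from absence in E' - Fe, the edge is in Fe
      have hinFe : ∀ y : V, s(y, w) ∈ E.erase s(p, q) → s(y, w) ∉ E.erase s(p, q) - Fe →
          s(y, w) ∈ Fe := by
        intro y hyE' hyabs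
        have h0 : (E.erase s(p, q) - Fe).count s(y, w) = 0 :=
          Multiset.count_eq_zero_of_notMem hyabs
        rw [Multiset.count_sub] at h0
        have h1 : 1 ≤ (E.erase s(p, q)).count s(y, w) :=
          Multiset.one_le_count_iff_mem.mpr hyE'
        exact Multiset.one_le_count_iff_mem.mp (by omega)
      -- the swap argument, uniform in the chosen endpoint x ∈ {p, q}
      have hmain : ∀ x : V, x ∈ s(p, q) → x ∉ T → x ∉ (↑Fv : Set V) → s(x, w) ∈ Fe →
          sInf {n | ∃ (Fv : Finset V) (Fe : Multiset (Sym2 V)), (↑Fv : Set V) ⊆ Tᶜ ∧ Fe ≤ E ∧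
            n = Fv.card + Multiset.card Fe ∧ ¬ Connects (E - Fe) (↑Fv) u v} ≤
            Fv.card + Multiset.card Fe := by
        intro x hxpq hxT hxF hxFe
        have hxFv : x ∉ Fv := fun hh => hxF (by exact_mod_cast hh)
        have hcard : 0 < Multiset.card Fe :=
          Multiset.card_pos.mpr (fun hh => by simp [hh] at hxFe)
        refine le_trans (Nat.sInf_le ⟨insert x Fv, Fe.erase s(x, w), ?_, ?_, rfl, ?_⟩) ?_
        · intro a ha
          rw [Finset.coe_insert, Set.mem_insert_iff] at ha
          rcases ha with rfl | ha
          · exact hxT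
          · exact hFvT ha
        · exact le_trans (Multiset.erase_le _ _) hFeE
        · exact swap_step hxpq (Sym2.mem_mk_left x w) hcut
        · rw [Finset.card_insert_of_notMem hxFv, Multiset.card_erase_of_mem hxFe]
          have := Nat.succ_pred_eq_of_pos hcard
          omega
      rcases habsent with habs | habs
      · exact hmain p (Sym2.mem_mk_left p q) hp hpF (hinFe p hpwE' habs)
      · exact hmain q (Sym2.mem_mk_right p q) hq hqF (hinFe q hqwE' habs)
    · -- the same cut works in E
      exact Nat.sInf_le ⟨Fv, Fe, hFvT, hFeE, rfl, hcon⟩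

end
end
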